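/- arXiv:1709.00625 — 9 statements merged into one kernel-verified Lean document; each statement's English description precedes it below -/
import Mathlib

section
/- Let (N, W) be a simple game with n players and let i, j be two players. Suppose there exist k and m with c_i(k) > c_j(k) and c_i(m) < c_j(m). Then there exist power indices Φ and Ψ (given by weighting vectors) such that Φ(i) > Φ(j) and Ψ(i) < Ψ(j). -/
/-- The number of coalitions of size `k` in which player `i` is critical, in the
simple game on players `Fin n` with winning coalitions `W`. -/
noncomputable def critCount (n : ℕ) (W : Set (Finset (Fin n))) (i : Fin n) (k : ℕ) : ℕ :=
  Set.ncard {S : Finset (Fin n) | S.card = k ∧ i ∈ S ∧ S ∈ W ∧ S.erase i ∉ W}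

/-- If `c_i(k) > c_j(k)` and `c_i(m) < c_j(m)` for some `k, m`, then there exist power
indices `Φ` (given by `lam`) and `Ψ` (given by `psi`) with `Φ(i) > Φ(j)` and `Ψ(i) < Ψ(j)`. -/
theorem exists_power_indices_disagree
    (n : ℕ) (W : Set (Finset (Fin n)))
    (hempty : ∅ ∉ W) (hfull : Finset.univ ∈ W)
    (hmono : ∀ S T : Finset (Fin n), S ∈ W → S ⊆ T → T ∈ W)
    (i j : Fin n) (k m : ℕ)
    (hk : k ∈ Finset.Icc 1 n) (hm : m ∈ Finset.Icc 1 n)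
    (h1 : critCount n W i k > critCount n W j k)
    (h2 : critCount n W i m < critCount n W j m) :
    ∃ lam psi : ℕ → ℝ,
      (∀ t ∈ Finset.Icc 1 n, 0 ≤ lam t) ∧
      (∑ t ∈ Finset.Icc 1 n, lam t * ((n - 1).choose (t - 1) : ℝ)) = 1 ∧
      (∀ t ∈ Finset.Icc 1 n, 0 ≤ psi t) ∧
      (∑ t ∈ Finset.Icc 1 n, psi t * ((n - 1).choose (t - 1) : ℝ)) = 1 ∧
      (∑ t ∈ Finset.Icc 1 n, lam t * (critCount n W i t : ℝ)) >
        (∑ t ∈ Finset.Icc 1 n, lam t * (critCount n W j t : ℝ)) ∧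
      (∑ t ∈ Finset.Icc 1 n, psi t * (critCount n W i t : ℝ)) <
        (∑ t ∈ Finset.Icc 1 n, psi t * (critCount n W j t : ℝ)) := by

  obtain ⟨hk1, hkn⟩ := Finset.mem_Icc.mp hk
  obtain ⟨hm1, hmn⟩ := Finset.mem_Icc.mp hm
  have hck : (0:ℝ) < ((n - 1).choose (k - 1) : ℝ) := by
    exact_mod_cast Nat.choose_pos (by omega)
  have hcm : (0:ℝ) < ((n - 1).choose (m - 1) : ℝ) := by
    exact_mod_cast Nat.choose_pos (by omega)
  refine ⟨fun t => if t = k then ((n - 1).choose (k - 1) : ℝ)⁻¹ else 0,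
          fun t => if t = m then ((n - 1).choose (m - 1) : ℝ)⁻¹ else 0, ?_, ?_, ?_, ?_, ?_, ?_⟩
  · intro t _; dsimp only; split <;> positivity
  · rw [Finset.sum_eq_single_of_mem k hk]
    · simp [inv_mul_cancel₀ hck.ne']
    · intro b _ hb; simp [hb]
  · intro t _; dsimp only; split <;> positivity
  · rw [Finset.sum_eq_single_of_mem m hm]
    · simp [inv_mul_cancel₀ hcm.ne']
    · intro b _ hb; simp [hb]
  · rw [Finset.sum_eq_single_of_mem k hk (fun b _ hb => by simp [hb]),
        Finset.sum_eq_single_of_mem k hk (fun b _ hb => by simp [hb])]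
    simp only [if_pos rfl]
    apply mul_lt_mul_of_pos_left _ (inv_pos.mpr hck)
    exact_mod_cast h1
  · rw [Finset.sum_eq_single_of_mem m hm (fun b _ hb => by simp [hb]),
        Finset.sum_eq_single_of_mem m hm (fun b _ hb => by simp [hb])]
    simp only [if_pos rfl]
    apply mul_lt_mul_of_pos_left _ (inv_pos.mpr hcm)
    exact_mod_cast h2
end

section
/- In the bicameral game with parameters (m_s, m_r, q_s, q_r), where m_s < m_r and the quotas are simple majorities (q_s = ⌈(m_s+1)/2⌉ and q_r = ⌈(m_r+1)/2⌉): if q_s · m_r > q_r · m_s, then c_s(k) > c_r(k) for every k such that c_s(k) ≠ 0. -/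
/-- A coalition in the bicameral game with `ms` senators (the left summands) and `mr`
representatives (the right summands) is winning iff it contains at least `qs` senators
and at least `qr` representatives. -/
def bicamWinning (ms mr qs qr : ℕ) (S : Finset (Fin ms ⊕ Fin mr)) : Prop :=
  qs ≤ (S.filter (fun p => p.isLeft)).card ∧ qr ≤ (S.filter (fun p => p.isRight)).card

/-- The number of coalitions of size `k` in which player `i` is critical in the
bicameral game with parameters `(ms, mr, qs, qr)`. -/
noncomputable def bicamCrit (ms mr qs qr : ℕ) (i : Fin ms ⊕ Fin mr) (k : ℕ) : ℕ :=
  Set.ncard {S : Finset (Fin ms ⊕ Fin mr) |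
    S.card = k ∧ i ∈ S ∧ bicamWinning ms mr qs qr S ∧
      ¬ bicamWinning ms mr qs qr (S.erase i)}

section Arith
open Nat

lemma bicam_int_cond (a b qs qr : ℤ) (h1 : qr * a + 1 ≤ qs * b) (h2 : qr - qs ≤ b - a) :
    (qr - qs) * (b + 1) ≤ (b - a) * (qr + 1) := by nlinarith

lemma bicam_int_step (a b n qs qr : ℤ) (h : (qr - qs) * (b + 1) ≤ (b - a) * (n + 1)) :
    (a - (n + qs - qr)) * (n + 1) ≤ (b - n) * ((n + qs - qr) + 1) := by nlinarith

/-- Step condition: `(qr-qs)*(b+1) ≤ (b-a)*(j+1)` for `j ≥ qr`. -/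
lemma bicam_step_cond (a b qs qr j : ℕ) (hab : a < b) (hqs : qs = a / 2 + 1)
    (hqr : qr = b / 2 + 1) (hq : qs * b > qr * a) (hj : qr ≤ j) :
    ((qr : ℤ) - qs) * (b + 1) ≤ ((b : ℤ) - a) * (j + 1) := by
  have hd : (qr : ℤ) - qs ≤ (b : ℤ) - a := by omega
  have h1 := bicam_int_cond a b qs qr (by exact_mod_cast hq) hd
  calc ((qr : ℤ) - qs) * (b + 1) ≤ ((b : ℤ) - a) * (qr + 1) := h1
    _ ≤ ((b : ℤ) - a) * (j + 1) := by
        have h2 : (0:ℤ) ≤ (b:ℤ) - a := by omega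
        have h3 : (qr:ℤ) + 1 ≤ (j:ℤ) + 1 := by exact_mod_cast by omega
        nlinarith

/-- Key inequality by induction from `j = qr`. -/
lemma bicam_key_ineq (a b qs qr : ℕ) (ha1 : 1 ≤ a) (hab : a < b)
    (hqs : qs = a / 2 + 1) (hqr : qr = b / 2 + 1) (hq : qs * b > qr * a) :
    ∀ j, qr ≤ j → j ≤ b →
      (b - 1).choose (qr - 1) * (a.choose (j + qs - qr)) <
        (a - 1).choose (qs - 1) * (b.choose j) := by
  have hqsa : qs ≤ a := by omega
  have hqrb : qr ≤ b := by omega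
  have hA : 0 < (a - 1).choose (qs - 1) := Nat.choose_pos (by omega)
  have hB : 0 < (b - 1).choose (qr - 1) := Nat.choose_pos (by omega)
  intro j hj1 hj2
  induction j with
  | zero => omega
  | succ n ih =>
    set A := (a - 1).choose (qs - 1) with hAdef
    set B := (b - 1).choose (qr - 1) with hBdef
    rcases Nat.lt_or_ge qr (n+1) with hlt | hge
    · -- inductive step from n
      have hn1 : qr ≤ n := by omega
      have hn2 : n ≤ b := by omega
      have IH := ih hn1 hn2
      set i := n + qs - qr with hi
      have hi1 : n + 1 + qs - qr = i + 1 := by omega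
      rw [hi1]
      have hbn : 1 ≤ b - n := by omega
      have e1 : A * (b.choose (n+1) * (n+1)) = A * b.choose n * (b - n) := by
        rw [Nat.choose_succ_right_eq]; ring
      have h3 : a.choose (i+1) * (i+1) = a.choose i * (a - i) := Nat.choose_succ_right_eq a i
      have hcond : (a - i) * (n + 1) ≤ (b - n) * (i + 1) := by
        rcases Nat.lt_or_ge a i with h | h
        · have h0 : a - i = 0 := by omega
          rw [h0]; simp
        · have hstep := bicam_step_cond a b qs qr n hab hqs hqr hq hn1
          have hs2 := bicam_int_step a b n qs qr hstep
          have hiz : (i : ℤ) = (n : ℤ) + qs - qr := by omega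
          zify [h, show n ≤ b by omega]
          rw [hiz]; convert hs2 using 2
      have e2 : a.choose (i+1) * (n+1) ≤ a.choose i * (b - n) := by
        have hmul : a.choose (i+1) * (n+1) * (i+1) ≤ a.choose i * (b - n) * (i+1) := by
          calc a.choose (i+1) * (n+1) * (i+1)
              = a.choose (i+1) * (i+1) * (n+1) := by ring
            _ = a.choose i * (a - i) * (n+1) := by rw [h3]
            _ = a.choose i * ((a - i) * (n+1)) := by ring
            _ ≤ a.choose i * ((b - n) * (i+1)) := Nat.mul_le_mul_left _ hcond
            _ = a.choose i * (b - n) * (i+1) := by ring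
        exact Nat.le_of_mul_le_mul_right hmul (by omega)
      have hbig : B * a.choose (i+1) * (n+1) < A * b.choose (n+1) * (n+1) := by
        calc B * a.choose (i+1) * (n+1) = B * (a.choose (i+1) * (n+1)) := by ring
          _ ≤ B * (a.choose i * (b - n)) := Nat.mul_le_mul_left _ e2
          _ = B * a.choose i * (b - n) := by ring
          _ < A * b.choose n * (b - n) := by
              exact mul_lt_mul_of_pos_right IH (by omega)
          _ = A * (b.choose (n+1) * (n+1)) := e1.symm
          _ = A * b.choose (n+1) * (n+1) := by ring
      exact Nat.lt_of_mul_lt_mul_right hbig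
    · -- base case n + 1 = qr
      have hn : n + 1 = qr := by omega
      have hi : n + 1 + qs - qr = qs := by omega
      rw [hi]
      have ea : a.choose qs * qs = A * a := by
        have h := Nat.add_one_mul_choose_eq (a - 1) (qs - 1)
        have h1 : a - 1 + 1 = a := by omega
        have h2 : qs - 1 + 1 = qs := by omega
        rw [h1, h2] at h
        linarith
      have eb : b.choose (n+1) * (n+1) = B * b := by
        have h := Nat.add_one_mul_choose_eq (b - 1) (qr - 1)
        have h1 : b - 1 + 1 = b := by omega
        have h2 : qr - 1 + 1 = qr := by omega
        rw [h1, h2] at h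
        rw [hn]
        linarith
      have hq' : (n+1) * a < qs * b := by rw [hn]; exact hq
      have hmain : B * a.choose qs * (qs * (n+1)) < A * b.choose (n+1) * (qs * (n+1)) := by
        calc B * a.choose qs * (qs * (n+1)) = B * (a.choose qs * qs) * (n+1) := by ring
          _ = B * (A * a) * (n+1) := by rw [ea]
          _ = A * B * (a * (n+1)) := by ring
          _ < A * B * (qs * b) := by
              refine mul_lt_mul_of_pos_left ?_ (Nat.mul_pos hA hB)
              calc a * (n+1) = (n+1) * a := by ring
                _ < qs * b := hq'
          _ = A * (B * b) * qs := by ring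
          _ = A * (b.choose (n+1) * (n+1)) * qs := by rw [eb]
          _ = A * b.choose (n+1) * (qs * (n+1)) := by ring
      exact Nat.lt_of_mul_lt_mul_right hmain

end Arith

section Counting
open Finset

variable {α β : Type*} [DecidableEq α] [DecidableEq β]

lemma bicam_card_filter_isLeft (S : Finset (α ⊕ β)) :
    (S.filter (fun p => p.isLeft)).card = S.toLeft.card := by
  rw [show S.filter (fun p => p.isLeft) = S.toLeft.map ⟨Sum.inl, Sum.inl_injective⟩ by
    ext x; cases x <;> simp, card_map]

lemma bicam_card_filter_isRight (S : Finset (α ⊕ β)) :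
    (S.filter (fun p => p.isRight)).card = S.toRight.card := by
  rw [show S.filter (fun p => p.isRight) = S.toRight.map ⟨Sum.inr, Sum.inr_injective⟩ by
    ext x; cases x <;> simp, card_map]

lemma bicam_toLeft_erase_inl (S : Finset (α ⊕ β)) (s : α) :
    (S.erase (Sum.inl s)).toLeft = S.toLeft.erase s := by
  ext x; simp [Finset.mem_erase]

lemma bicam_toRight_erase_inl (S : Finset (α ⊕ β)) (s : α) :
    (S.erase (Sum.inl s)).toRight = S.toRight := by
  ext x; simp [Finset.mem_erase]

lemma bicam_toLeft_erase_inr (S : Finset (α ⊕ β)) (r : β) :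
    (S.erase (Sum.inr r)).toLeft = S.toLeft := by
  ext x; simp [Finset.mem_erase]

lemma bicam_toRight_erase_inr (S : Finset (α ⊕ β)) (r : β) :
    (S.erase (Sum.inr r)).toRight = S.toRight.erase r := by
  ext x; simp [Finset.mem_erase]

/-- counting subsets of a sum type with a marked left element -/
lemma bicam_ncard_marked_left [Fintype α] [Fintype β] (s : α) (p q : ℕ) (hp : 1 ≤ p) :
    ({S : Finset (α ⊕ β) | Sum.inl s ∈ S ∧ S.toLeft.card = p ∧ S.toRight.card = q}).ncard
      = (Fintype.card α - 1).choose (p-1) * (Fintype.card β).choose q := by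
  classical
  have hset : {S : Finset (α ⊕ β) | Sum.inl s ∈ S ∧ S.toLeft.card = p ∧ S.toRight.card = q}
      = ↑((((Finset.univ.erase s).powersetCard (p-1) ×ˢ
          (Finset.univ : Finset β).powersetCard q)).image
          (fun TR => (insert s TR.1).disjSum TR.2)) := by
    ext S
    simp only [Set.mem_setOf_eq, coe_image, Set.mem_image, mem_coe, mem_product,
      mem_powersetCard]
    constructor
    · rintro ⟨hs, hL, hR⟩
      have hsl : s ∈ S.toLeft := by simpa using hs
      refine ⟨⟨S.toLeft.erase s, S.toRight⟩, ⟨⟨?_, ?_⟩, ⟨by simp, hR⟩⟩, ?_⟩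
      · intro x hx
        simp only [mem_erase] at hx ⊢
        exact ⟨hx.1, mem_univ _⟩
      · rw [card_erase_of_mem hsl, hL]
      · simp only
        rw [insert_erase hsl, toLeft_disjSum_toRight]
    · rintro ⟨⟨T, R⟩, ⟨⟨hT, hTc⟩, ⟨-, hRc⟩⟩, rfl⟩
      have hsT : s ∉ T := fun h => by simpa using (hT h)
      refine ⟨by simp, ?_, by simp [hRc]⟩
      rw [toLeft_disjSum, card_insert_of_notMem hsT, hTc]
      omega
  rw [hset, Set.ncard_coe_finset]
  rw [Finset.card_image_of_injOn, card_product, card_powersetCard, card_powersetCard,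
    card_erase_of_mem (mem_univ s), card_univ, card_univ]
  rintro ⟨T1, R1⟩ h1 ⟨T2, R2⟩ h2 he
  simp only [mem_coe, mem_product, mem_powersetCard] at h1 h2
  simp only [Finset.disjSum_inj] at he
  have hs1 : s ∉ T1 := fun h => by simpa using (h1.1.1 h)
  have hs2 : s ∉ T2 := fun h => by simpa using (h2.1.1 h)
  have hT : T1 = T2 := by
    have h12 := he.1
    rw [← erase_insert hs1, ← erase_insert hs2, h12]
  exact Prod.ext hT he.2

lemma bicam_ncard_marked_right [Fintype α] [Fintype β] (r : β) (p q : ℕ) (hq : 1 ≤ q) :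
    ({S : Finset (α ⊕ β) | Sum.inr r ∈ S ∧ S.toLeft.card = p ∧ S.toRight.card = q}).ncard
      = (Fintype.card α).choose p * (Fintype.card β - 1).choose (q-1) := by
  classical
  have hset : {S : Finset (α ⊕ β) | Sum.inr r ∈ S ∧ S.toLeft.card = p ∧ S.toRight.card = q}
      = ↑((((Finset.univ : Finset α).powersetCard p ×ˢ
          (Finset.univ.erase r).powersetCard (q-1))).image
          (fun TR => TR.1.disjSum (insert r TR.2))) := by
    ext S
    simp only [Set.mem_setOf_eq, coe_image, Set.mem_image, mem_coe, mem_product,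
      mem_powersetCard]
    constructor
    · rintro ⟨hr, hL, hR⟩
      have hrl : r ∈ S.toRight := by simpa using hr
      refine ⟨⟨S.toLeft, S.toRight.erase r⟩, ⟨⟨by simp, hL⟩, ⟨?_, ?_⟩⟩, ?_⟩
      · intro x hx
        simp only [mem_erase] at hx ⊢
        exact ⟨hx.1, mem_univ _⟩
      · rw [card_erase_of_mem hrl, hR]
      · simp only
        rw [insert_erase hrl, toLeft_disjSum_toRight]
    · rintro ⟨⟨T, R⟩, ⟨⟨-, hTc⟩, ⟨hR, hRc⟩⟩, rfl⟩
      have hrR : r ∉ R := fun h => by simpa using (hR h)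
      refine ⟨by simp, by simp [hTc], ?_⟩
      rw [toRight_disjSum, card_insert_of_notMem hrR, hRc]
      omega
  rw [hset, Set.ncard_coe_finset]
  rw [Finset.card_image_of_injOn, card_product, card_powersetCard, card_powersetCard,
    card_erase_of_mem (mem_univ r), card_univ, card_univ]
  rintro ⟨T1, R1⟩ h1 ⟨T2, R2⟩ h2 he
  simp only [mem_coe, mem_product, mem_powersetCard] at h1 h2
  simp only [Finset.disjSum_inj] at he
  have hr1 : r ∉ R1 := fun h => by simpa using (h1.2.1 h)
  have hr2 : r ∉ R2 := fun h => by simpa using (h2.2.1 h)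
  have hR : R1 = R2 := by
    have h12 := he.2
    rw [← erase_insert hr1, ← erase_insert hr2, h12]
  exact Prod.ext he.1 hR

end Counting

open Finset in
/-- In a bicameral game with simple-majority quotas (`qs = ms/2 + 1 = ⌈(ms+1)/2⌉`,
`qr = mr/2 + 1 = ⌈(mr+1)/2⌉`) and `ms < mr`: if `qs * mr > qr * ms`, then the critical
number of a senator strictly exceeds that of a representative whenever it is nonzero. -/
theorem bicam_senator_dominates_of_quota_ineq (ms mr qs qr : ℕ)
    (hsize : ms < mr) (hqs : qs = ms / 2 + 1) (hqr : qr = mr / 2 + 1)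
    (hq : qs * mr > qr * ms)
    (s : Fin ms) (r : Fin mr) :
    ∀ k : ℕ, bicamCrit ms mr qs qr (Sum.inl s) k ≠ 0 →
      bicamCrit ms mr qs qr (Sum.inl s) k > bicamCrit ms mr qs qr (Sum.inr r) k := by
  intro k hne
  have hms1 : 1 ≤ ms := s.pos
  have hqs1 : 1 ≤ qs := by omega
  have hqr1 : 1 ≤ qr := by omega
  have hW : ∀ S : Finset (Fin ms ⊕ Fin mr),
      bicamWinning ms mr qs qr S ↔ qs ≤ S.toLeft.card ∧ qr ≤ S.toRight.card := by
    intro S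
    unfold bicamWinning
    rw [bicam_card_filter_isLeft, bicam_card_filter_isRight]
  -- extract a witness from nonzeroness
  obtain ⟨S0, hS0⟩ := Set.nonempty_of_ncard_ne_zero hne
  simp only [Set.mem_setOf_eq] at hS0
  obtain ⟨hc0, hm0, hw0, hnw0⟩ := hS0
  rw [hW] at hw0
  have hsl0 : s ∈ S0.toLeft := by simpa using hm0
  have hL0 : S0.toLeft.card = qs := by
    by_contra hne'
    apply hnw0
    rw [hW, bicam_toLeft_erase_inl, bicam_toRight_erase_inl]
    rw [card_erase_of_mem hsl0]
    constructor
    · omega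
    · exact hw0.2
  have hsum0 : S0.toLeft.card + S0.toRight.card = k := by
    rw [← hc0]; exact card_toLeft_add_card_toRight
  have hRb : S0.toRight.card ≤ mr := by
    simpa using card_le_univ S0.toRight
  have hk1 : qs + qr ≤ k := by omega
  have hk2 : k ≤ qs + mr := by omega
  -- set equality for the senator
  have e1 : {S : Finset (Fin ms ⊕ Fin mr) |
        S.card = k ∧ Sum.inl s ∈ S ∧ bicamWinning ms mr qs qr S ∧
          ¬ bicamWinning ms mr qs qr (S.erase (Sum.inl s))}
      = {S : Finset (Fin ms ⊕ Fin mr) |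
          Sum.inl s ∈ S ∧ S.toLeft.card = qs ∧ S.toRight.card = k - qs} := by
    ext S
    simp only [Set.mem_setOf_eq]
    constructor
    · rintro ⟨hc, hm, hw, hnw⟩
      rw [hW] at hw
      have hsl : s ∈ S.toLeft := by simpa using hm
      have hsum : S.toLeft.card + S.toRight.card = k := by
        rw [← hc]; exact card_toLeft_add_card_toRight
      have hL : S.toLeft.card = qs := by
        by_contra hne'
        apply hnw
        rw [hW, bicam_toLeft_erase_inl, bicam_toRight_erase_inl, card_erase_of_mem hsl]
        exact ⟨by omega, hw.2⟩
      exact ⟨hm, hL, by omega⟩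
    · rintro ⟨hm, hL, hR⟩
      have hsl : s ∈ S.toLeft := by simpa using hm
      have hsum : S.toLeft.card + S.toRight.card = S.card :=
        card_toLeft_add_card_toRight
      refine ⟨by omega, hm, ?_, ?_⟩
      · rw [hW]; exact ⟨by omega, by omega⟩
      · rw [hW, bicam_toLeft_erase_inl, bicam_toRight_erase_inl, card_erase_of_mem hsl]
        intro h
        omega
  -- set equality for the representative
  have e2 : {S : Finset (Fin ms ⊕ Fin mr) |
        S.card = k ∧ Sum.inr r ∈ S ∧ bicamWinning ms mr qs qr S ∧
          ¬ bicamWinning ms mr qs qr (S.erase (Sum.inr r))}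
      = {S : Finset (Fin ms ⊕ Fin mr) |
          Sum.inr r ∈ S ∧ S.toLeft.card = k - qr ∧ S.toRight.card = qr} := by
    ext S
    simp only [Set.mem_setOf_eq]
    constructor
    · rintro ⟨hc, hm, hw, hnw⟩
      rw [hW] at hw
      have hrl : r ∈ S.toRight := by simpa using hm
      have hsum : S.toLeft.card + S.toRight.card = k := by
        rw [← hc]; exact card_toLeft_add_card_toRight
      have hR : S.toRight.card = qr := by
        by_contra hne'
        apply hnw
        rw [hW, bicam_toLeft_erase_inr, bicam_toRight_erase_inr, card_erase_of_mem hrl]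
        exact ⟨hw.1, by omega⟩
      exact ⟨hm, by omega, hR⟩
    · rintro ⟨hm, hL, hR⟩
      have hrl : r ∈ S.toRight := by simpa using hm
      have hsum : S.toLeft.card + S.toRight.card = S.card :=
        card_toLeft_add_card_toRight
      refine ⟨by omega, hm, ?_, ?_⟩
      · rw [hW]; exact ⟨by omega, by omega⟩
      · rw [hW, bicam_toLeft_erase_inr, bicam_toRight_erase_inr, card_erase_of_mem hrl]
        intro h
        omega
  unfold bicamCrit
  rw [e1, e2, bicam_ncard_marked_left s qs (k - qs) hqs1,
    bicam_ncard_marked_right r (k - qr) qr hqr1]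
  simp only [Fintype.card_fin]
  have hkey := bicam_key_ineq ms mr qs qr hms1 hsize hqs hqr hq (k - qs) (by omega) (by omega)
  have hidx : k - qs + qs - qr = k - qr := by omega
  rw [hidx] at hkey
  calc ms.choose (k - qr) * (mr - 1).choose (qr - 1)
      = (mr - 1).choose (qr - 1) * ms.choose (k - qr) := by ring
    _ < (ms - 1).choose (qs - 1) * mr.choose (k - qs) := hkey
end

section
/- In the bicameral game with parameters (m_s, m_r, q_s, q_r), where m_s < m_r and the quotas are simple majorities (q_s = ⌈(m_s+1)/2⌉ and q_r = ⌈(m_r+1)/2⌉), suppose one of the following holds: (i) m_s and m_r are both odd; (ii) m_s and m_r are both even; (iii) m_s is even and m_r is odd; (iv) m_s is odd, m_r is even, and m_r > 2·m_s. Then c_s(k) > c_r(k) for every k such that c_s(k) ≠ 0. Consequently, for every power index Φ that does not assign power 0 to both a senator and a representative, a senator has strictly greater Φ-power than a representative. -/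
/-!
A senator is critical in a coalition of size `k` exactly when the coalition contains him,
exactly `q_s` senators and `k - q_s ≥ q_r` representatives. Hence
`c_s(k) = C(m_s-1, q_s-1) C(m_r, k-q_s)` for `k ≥ q_s + q_r` (and `0` otherwise), and
symmetrically `c_r(k) = C(m_r-1, q_r-1) C(m_s, k-q_r)`. Write `k = q_s + q_r + j`. At `j = 0`
the inequality `c_r(k) < c_s(k)` amounts to `m_s q_r < m_r q_s`, and passing from `j` to `j + 1`
multiplies `c_r` by `(m_s - q_s - j)/(q_s + j + 1)` and `c_s` by the larger ratio
`(m_r - q_r - j)/(q_r + j + 1)`. For majority quotas both facts are elementary inequalities,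
and they are where the parity conditions enter. Thus `c_r ≤ c_s` everywhere, with equality only
where both vanish, so any nonnegative weighting ranks the senator strictly higher unless it gives
both players power zero.
-/

open Finset Sum

section
variable {α β : Type*}

lemma card_filter_isLeft (u : Finset (α ⊕ β)) : #(u.filter (·.isLeft)) = #u.toLeft := by
  rw [← card_map (Function.Embedding.inl : α ↪ α ⊕ β)]
  congr 1
  ext (x | x) <;> simp

lemma card_filter_isRight (u : Finset (α ⊕ β)) : #(u.filter (·.isRight)) = #u.toRight := by
  rw [← card_map (Function.Embedding.inr : β ↪ α ⊕ β)]
  congr 1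
  ext (x | x) <;> simp

lemma toLeft_erase_inl [DecidableEq α] [DecidableEq β] (u : Finset (α ⊕ β)) (a : α) :
    (u.erase (inl a)).toLeft = u.toLeft.erase a := by
  ext; simp

lemma toRight_erase_inl [DecidableEq α] [DecidableEq β] (u : Finset (α ⊕ β)) (a : α) :
    (u.erase (inl a)).toRight = u.toRight := by
  ext; simp

lemma ncard_setOf_card_eq [Fintype α] (n : ℕ) :
    {t : Finset α | #t = n}.ncard = (Fintype.card α).choose n := by
  rw [show {t : Finset α | #t = n} = ↑(powersetCard n (univ : Finset α)) by ext; simp,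
    Set.ncard_coe_finset, card_powersetCard, card_univ]

lemma ncard_setOf_mem_and_card_eq [Fintype α] [DecidableEq α] (a : α) {n : ℕ} (hn : 0 < n) :
    {t : Finset α | a ∈ t ∧ #t = n}.ncard = (Fintype.card α - 1).choose (n - 1) := by
  have himage : {t : Finset α | a ∈ t ∧ #t = n} =
      ↑((powersetCard (n - 1) (univ.erase a)).image (insert a)) := by
    ext t
    simp only [Set.mem_ofPred_eq, coe_image, Set.mem_image, mem_coe, mem_powersetCard,
      subset_erase, subset_univ, true_and]
    constructor
    · rintro ⟨ha, rfl⟩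
      exact ⟨t.erase a, ⟨notMem_erase a t, by rw [card_erase_of_mem ha]⟩, insert_erase ha⟩
    · rintro ⟨t, ⟨ha, ht⟩, rfl⟩
      exact ⟨mem_insert_self a t, by rw [card_insert_of_notMem ha]; omega⟩
  rw [himage, Set.ncard_coe_finset, card_image_of_injOn, card_powersetCard,
    card_erase_of_mem (mem_univ a), card_univ]
  intro t ht u hu h
  simp only [mem_coe, mem_powersetCard, subset_erase] at ht hu
  rw [← erase_insert ht.1.2, h, erase_insert hu.1.2]
end

lemma bicamWinning_iff {ms mr qs qr : ℕ} {S : Finset (Fin ms ⊕ Fin mr)} :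
    bicamWinning ms mr qs qr S ↔ qs ≤ #S.toLeft ∧ qr ≤ #S.toRight := by
  rw [bicamWinning, card_filter_isLeft, card_filter_isRight]

lemma bicamWinning_map_sumComm {ms mr qs qr : ℕ} {S : Finset (Fin ms ⊕ Fin mr)} :
    bicamWinning mr ms qr qs (S.map (Equiv.sumComm _ _).toEmbedding) ↔
      bicamWinning ms mr qs qr S := by
  simp [bicamWinning_iff, and_comm]

lemma bicamCrit_inr_eq_bicamCrit_inl {ms mr qs qr : ℕ} (r : Fin mr) (k : ℕ) :
    bicamCrit ms mr qs qr (inr r) k = bicamCrit mr ms qr qs (inl r) k := by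
  let e := (Equiv.sumComm (Fin ms) (Fin mr)).finsetCongr
  rw [bicamCrit, bicamCrit, ← Set.ncard_preimage_of_injective_subset_range e.injective (by simp)]
  congr 1
  ext S
  have herase : (S.map (Equiv.sumComm _ _).toEmbedding).erase (inl r) =
      (S.erase (inr r)).map (Equiv.sumComm _ _).toEmbedding := (map_erase _ S (inr r)).symm
  simp only [Set.mem_preimage, Set.mem_ofPred_eq, e, Equiv.finsetCongr_apply, card_map, herase,
    bicamWinning_map_sumComm]
  simp

lemma bicamCritical_inl_iff {ms mr qs qr : ℕ} {s : Fin ms} {S : Finset (Fin ms ⊕ Fin mr)} :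
    inl s ∈ S ∧ bicamWinning ms mr qs qr S ∧ ¬bicamWinning ms mr qs qr (S.erase (inl s)) ↔
      s ∈ S.toLeft ∧ #S.toLeft = qs ∧ qr ≤ #S.toRight := by
  rw [← mem_toLeft]
  simp only [bicamWinning_iff, toLeft_erase_inl, toRight_erase_inl]
  constructor
  · rintro ⟨hs, ⟨hl, hr⟩, hlose⟩
    rw [card_erase_of_mem hs] at hlose
    exact ⟨hs, by omega, hr⟩
  · rintro ⟨hs, rfl, hr⟩
    have := card_pos.2 ⟨s, hs⟩
    rw [card_erase_of_mem hs]
    exact ⟨hs, ⟨le_rfl, hr⟩, by omega⟩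

lemma bicamCrit_inl {ms mr qs qr : ℕ} (hqs : 0 < qs) (s : Fin ms) (k : ℕ) :
    bicamCrit ms mr qs qr (inl s) k =
      if qs + qr ≤ k then (ms - 1).choose (qs - 1) * mr.choose (k - qs) else 0 := by
  rw [bicamCrit]
  simp only [bicamCritical_inl_iff, ← card_toLeft_add_card_toRight]
  split_ifs with hk
  · have hset : {S : Finset (Fin ms ⊕ Fin mr) |
        #S.toLeft + #S.toRight = k ∧ s ∈ S.toLeft ∧ #S.toLeft = qs ∧ qr ≤ #S.toRight} =
        sumEquiv ⁻¹' ({L | s ∈ L ∧ #L = qs} ×ˢ {R | #R = k - qs}) := by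
      ext S
      simp only [Set.mem_ofPred_eq, Set.mem_preimage, Set.mem_prod, sumEquiv_apply_fst,
        sumEquiv_apply_snd]
      constructor
      · rintro ⟨hcard, hs, hl, -⟩
        exact ⟨⟨hs, hl⟩, by omega⟩
      · rintro ⟨⟨hs, hl⟩, hr⟩
        exact ⟨by omega, hs, hl, by omega⟩
    rw [hset, Set.ncard_preimage_of_injective_subset_range sumEquiv.injective (by simp),
      Set.ncard_prod, ncard_setOf_mem_and_card_eq s hqs, ncard_setOf_card_eq, Fintype.card_fin,
      Fintype.card_fin]
  · rw [Set.ncard_eq_zero]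
    ext S
    simp only [Set.mem_ofPred_eq, Set.mem_empty_iff_false, iff_false]
    omega

lemma bicamCrit_inr {ms mr qs qr : ℕ} (hqr : 0 < qr) (r : Fin mr) (k : ℕ) :
    bicamCrit ms mr qs qr (inr r) k =
      if qs + qr ≤ k then (mr - 1).choose (qr - 1) * ms.choose (k - qr) else 0 := by
  rw [bicamCrit_inr_eq_bicamCrit_inl, bicamCrit_inl hqr, add_comm qr]

theorem lt_of_lt_of_mul_le_mul_succ {R : Type*} [CommSemiring R] [LinearOrder R]
    [IsStrictOrderedRing R] {a b : ℕ → R} {N : ℕ} (h0 : a 0 < b 0)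
    (hpos : ∀ j ≤ N, 0 < b j) (hstep : ∀ j < N, a (j + 1) * b j ≤ a j * b (j + 1)) : ∀ j ≤ N, a j < b j := by
  intro j hj
  induction j with
  | zero => exact h0
  | succ j ih =>
    refine lt_of_mul_lt_mul_right ?_ (hpos j (by omega)).le
    calc a (j + 1) * b j ≤ a j * b (j + 1) := hstep j hj
      _ < b j * b (j + 1) := mul_lt_mul_of_pos_right (ih (by omega)) (hpos (j + 1) hj)
      _ = b (j + 1) * b j := mul_comm _ _

theorem Nat.choose_mul_eq_choose_pred_mul {n k : ℕ} (hn : 0 < n) (hk : 0 < k) :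
    n.choose k * k = (n - 1).choose (k - 1) * n := by
  obtain ⟨n, rfl⟩ := Nat.exists_eq_add_one_of_ne_zero hn.ne'
  obtain ⟨k, rfl⟩ := Nat.exists_eq_add_one_of_ne_zero hk.ne'
  rw [Nat.add_sub_cancel, Nat.add_sub_cancel, mul_comm _ (n + 1), Nat.add_one_mul_choose_eq]

theorem Nat.choose_pred_mul_choose_lt {m n p q : ℕ} (hp : 0 < p) (hq : 0 < q) (hpn : p ≤ n)
    (hqm : q ≤ m) (h : n * q < m * p) :
    (m - 1).choose (q - 1) * n.choose p < (n - 1).choose (p - 1) * m.choose q := by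
  have hA := Nat.choose_pos (Nat.sub_le_sub_right hpn 1)
  have hB := Nat.choose_pos (Nat.sub_le_sub_right hqm 1)
  refine lt_of_mul_lt_mul_right (a := p * q) ?_ (Nat.zero_le _)
  calc (m - 1).choose (q - 1) * n.choose p * (p * q)
      = (m - 1).choose (q - 1) * (n.choose p * p) * q := by ring
    _ = (n - 1).choose (p - 1) * (m - 1).choose (q - 1) * (n * q) := by
      rw [Nat.choose_mul_eq_choose_pred_mul (by omega) hp]; ring
    _ < (n - 1).choose (p - 1) * (m - 1).choose (q - 1) * (m * p) :=
      Nat.mul_lt_mul_of_pos_left h (Nat.mul_pos hA hB)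
    _ = (n - 1).choose (p - 1) * (m.choose q * q) * p := by
      rw [Nat.choose_mul_eq_choose_pred_mul (by omega) hq]; ring
    _ = (n - 1).choose (p - 1) * m.choose q * (p * q) := by ring

theorem Nat.choose_succ_mul_choose_le {m n p q : ℕ}
    (h : (n - p) * (q + 1) ≤ (m - q) * (p + 1)) :
    n.choose (p + 1) * m.choose q ≤ n.choose p * m.choose (q + 1) := by
  refine le_of_mul_le_mul_right (a := (p + 1) * (q + 1)) ?_ (by positivity)
  calc n.choose (p + 1) * m.choose q * ((p + 1) * (q + 1))
      = n.choose (p + 1) * (p + 1) * m.choose q * (q + 1) := by ring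
    _ = n.choose p * m.choose q * ((n - p) * (q + 1)) := by
      rw [Nat.choose_succ_right_eq]; ring
    _ ≤ n.choose p * m.choose q * ((m - q) * (p + 1)) := Nat.mul_le_mul_left _ h
    _ = n.choose p * (m.choose (q + 1) * (q + 1)) * (p + 1) := by
      rw [Nat.choose_succ_right_eq]; ring
    _ = n.choose p * m.choose (q + 1) * ((p + 1) * (q + 1)) := by ring

theorem Nat.choose_pred_mul_choose_add_lt {m n p q N : ℕ} (hp : 0 < p) (hq : 0 < q)
    (hpn : p ≤ n) (hN : q + N ≤ m) (hbase : n * q < m * p)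
    (hstep : ∀ j < N, (n - (p + j)) * (q + j + 1) ≤ (m - (q + j)) * (p + j + 1)) :
    (m - 1).choose (q - 1) * n.choose (p + N) < (n - 1).choose (p - 1) * m.choose (q + N) := by
  have hA := Nat.choose_pos (Nat.sub_le_sub_right hpn 1)
  refine lt_of_lt_of_mul_le_mul_succ (a := fun j => (m - 1).choose (q - 1) * n.choose (p + j))
    (b := fun j => (n - 1).choose (p - 1) * m.choose (q + j))
    (Nat.choose_pred_mul_choose_lt hp hq hpn (by omega) hbase) (fun j hj => ?_) (fun j hj => ?_)
    N le_rfl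
  · exact Nat.mul_pos hA (Nat.choose_pos (by omega))
  · have := Nat.mul_le_mul_left ((m - 1).choose (q - 1) * (n - 1).choose (p - 1))
      (Nat.choose_succ_mul_choose_le (hstep j hj))
    simp only [← add_assoc]
    linarith

theorem mod_two_le_or_lt_of_parity {ms mr : ℕ}
    (hcase : (Odd ms ∧ Odd mr) ∨ (Even ms ∧ Even mr) ∨ (Even ms ∧ Odd mr) ∨
      (Odd ms ∧ Even mr ∧ mr > 2 * ms)) :
    ms % 2 ≤ mr % 2 ∨ 2 * ms < mr := by
  simp only [Nat.odd_iff, Nat.even_iff] at hcase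
  omega

section Majority

variable {ms mr qs qr : ℕ}

theorem mul_quota_lt_mul_quota (hsize : ms < mr) (hpar : ms % 2 ≤ mr % 2 ∨ 2 * ms < mr)
    (hqs : qs = ms / 2 + 1) (hqr : qr = mr / 2 + 1) : ms * qr < mr * qs := by
  subst hqs hqr
  obtain ⟨a, e, he, rfl⟩ : ∃ a e, e ≤ 1 ∧ ms = 2 * a + e :=
    ⟨ms / 2, ms % 2, by omega, by omega⟩
  obtain ⟨b, f, hf, rfl⟩ : ∃ b f, f ≤ 1 ∧ mr = 2 * b + f :=
    ⟨mr / 2, mr % 2, by omega, by omega⟩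
  rw [show (2 * a + e) / 2 = a by omega, show (2 * b + f) / 2 = b by omega]
  have hpar' : e ≤ f ∨ 2 * a + 1 < b := by omega
  rcases hpar' with hpar' | hpar' <;> interval_cases e <;> interval_cases f <;>
    first | omega | nlinarith

theorem sub_quota_mul_le_sub_quota_mul (hsize : ms < mr)
    (hpar : ms % 2 ≤ mr % 2 ∨ 2 * ms < mr) (hqs : qs = ms / 2 + 1) (hqr : qr = mr / 2 + 1)
    (j : ℕ) :
    (ms - (qs + j)) * (qr + j + 1) ≤ (mr - (qr + j)) * (qs + j + 1) := by
  subst hqs hqr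
  obtain ⟨a, e, he, rfl⟩ : ∃ a e, e ≤ 1 ∧ ms = 2 * a + e :=
    ⟨ms / 2, ms % 2, by omega, by omega⟩
  obtain ⟨b, f, hf, rfl⟩ : ∃ b f, f ≤ 1 ∧ mr = 2 * b + f :=
    ⟨mr / 2, mr % 2, by omega, by omega⟩
  rw [show (2 * a + e) / 2 = a by omega, show (2 * b + f) / 2 = b by omega]
  rcases le_or_gt (2 * a + e) (a + 1 + j) with h | h
  · simp [Nat.sub_eq_zero_of_le h]
  have hpar' : e ≤ f ∨ 2 * a + 1 < b := by omega
  zify [h.le, show b + 1 + j ≤ 2 * b + f by omega]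
  have hab : (a : ℤ) ≤ b := by omega
  rcases hpar' with hpar' | hpar' <;> interval_cases e <;> interval_cases f <;> push_cast <;>
    first | omega | nlinarith

theorem bicamCrit_inr_lt_bicamCrit_inl (hsize : ms < mr)
    (hpar : ms % 2 ≤ mr % 2 ∨ 2 * ms < mr) (hqs : qs = ms / 2 + 1) (hqr : qr = mr / 2 + 1)
    (s : Fin ms) (r : Fin mr) {k : ℕ} (hk : bicamCrit ms mr qs qr (inl s) k ≠ 0) :
    bicamCrit ms mr qs qr (inr r) k < bicamCrit ms mr qs qr (inl s) k := by
  have hms := s.pos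
  have hqs0 : 0 < qs := by omega
  have hqr0 : 0 < qr := by omega
  have hk' : qs + qr ≤ k := by
    by_contra h
    simp [bicamCrit_inl hqs0, h] at hk
  rw [bicamCrit_inl hqs0, if_pos hk'] at hk ⊢
  rw [bicamCrit_inr hqr0, if_pos hk']
  obtain ⟨N, rfl⟩ : ∃ N, k = qs + qr + N := ⟨k - (qs + qr), by omega⟩
  rw [show qs + qr + N - qs = qr + N by omega, show qs + qr + N - qr = qs + N by omega] at *
  have hN : qr + N ≤ mr := by
    by_contra h
    exact hk (by rw [Nat.choose_eq_zero_of_lt (n := mr) (by omega), mul_zero])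
  exact Nat.choose_pred_mul_choose_add_lt hqs0 hqr0 (by omega) hN
    (mul_quota_lt_mul_quota hsize hpar hqs hqr)
    (fun j _ => sub_quota_mul_le_sub_quota_mul hsize hpar hqs hqr j)

theorem bicamCrit_inr_eq_zero (hsize : ms < mr) (hqs : qs = ms / 2 + 1)
    (hqr : qr = mr / 2 + 1) (s : Fin ms) (r : Fin mr) {k : ℕ}
    (hk : bicamCrit ms mr qs qr (inl s) k = 0) : bicamCrit ms mr qs qr (inr r) k = 0 := by
  have hms := s.pos
  rw [bicamCrit_inr (by omega)]
  split_ifs with hk'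
  · rw [bicamCrit_inl (by omega), if_pos hk'] at hk
    have hA := Nat.choose_pos (show qs - 1 ≤ ms - 1 by omega)
    have := Nat.choose_eq_zero_iff.1 ((Nat.mul_eq_zero.1 hk).resolve_left hA.ne')
    rw [Nat.choose_eq_zero_of_lt (n := ms) (by omega), mul_zero]
  · rfl

end Majority

theorem sum_mul_lt_sum_mul_of_lt_of_eq_zero {ι R : Type*} [CommRing R] [LinearOrder R]
    [IsStrictOrderedRing R] {s : Finset ι} {w x y : ι → R} (hw : ∀ t ∈ s, 0 ≤ w t)
    (hlt : ∀ t ∈ s, x t ≠ 0 → y t < x t) (hzero : ∀ t ∈ s, x t = 0 → y t = 0)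
    (hne : ¬(∑ t ∈ s, w t * x t = 0 ∧ ∑ t ∈ s, w t * y t = 0)) :
    ∑ t ∈ s, w t * y t < ∑ t ∈ s, w t * x t := by
  have hle : ∀ t ∈ s, w t * y t ≤ w t * x t := fun t ht => by
    refine mul_le_mul_of_nonneg_left ?_ (hw t ht)
    by_cases hx : x t = 0
    · rw [hzero t ht hx, hx]
    · exact (hlt t ht hx).le
  refine (sum_le_sum hle).lt_of_ne fun heq => hne ?_
  have hterm := (sum_eq_sum_iff_of_le hle).1 heq
  have hx0 : ∀ t ∈ s, w t * x t = 0 := fun t ht => by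
    by_cases hx : x t = 0
    · rw [hx, mul_zero]
    by_contra hwx
    exact (hlt t ht hx).ne (mul_left_cancel₀ (left_ne_zero_of_mul hwx) (hterm t ht))
  exact ⟨sum_eq_zero hx0, sum_eq_zero fun t ht => (hterm t ht).trans (hx0 t ht)⟩

/-- Theorem 1 of the paper: with simple-majority quotas and `ms < mr`, in each of the four
listed parity cases a senator's critical numbers strictly dominate a representative's,
and consequently every power index not assigning zero power to both ranks the senator
strictly above the representative. -/
theorem bicam_senator_ranked_above_representative (ms mr qs qr : ℕ)
    (hsize : ms < mr) (hqs : qs = ms / 2 + 1) (hqr : qr = mr / 2 + 1)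
    (hcase : (Odd ms ∧ Odd mr) ∨ (Even ms ∧ Even mr) ∨ (Even ms ∧ Odd mr) ∨
      (Odd ms ∧ Even mr ∧ mr > 2 * ms))
    (s : Fin ms) (r : Fin mr) :
    (∀ k : ℕ, bicamCrit ms mr qs qr (Sum.inl s) k ≠ 0 →
      bicamCrit ms mr qs qr (Sum.inl s) k > bicamCrit ms mr qs qr (Sum.inr r) k) ∧
    (∀ lam : ℕ → ℝ,
      (∀ t ∈ Finset.Icc 1 (ms + mr), 0 ≤ lam t) →
      (∑ t ∈ Finset.Icc 1 (ms + mr), lam t * ((ms + mr - 1).choose (t - 1) : ℝ)) = 1 →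
      ¬((∑ t ∈ Finset.Icc 1 (ms + mr),
            lam t * (bicamCrit ms mr qs qr (Sum.inl s) t : ℝ)) = 0 ∧
        (∑ t ∈ Finset.Icc 1 (ms + mr),
            lam t * (bicamCrit ms mr qs qr (Sum.inr r) t : ℝ)) = 0) →
      (∑ t ∈ Finset.Icc 1 (ms + mr), lam t * (bicamCrit ms mr qs qr (Sum.inl s) t : ℝ)) >
      (∑ t ∈ Finset.Icc 1 (ms + mr), lam t * (bicamCrit ms mr qs qr (Sum.inr r) t : ℝ))) := by
  have hpar := mod_two_le_or_lt_of_parity hcase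
  have hlt (k : ℕ) := bicamCrit_inr_lt_bicamCrit_inl (k := k) hsize hpar hqs hqr s r
  refine ⟨hlt, fun lam hlam _ hne => sum_mul_lt_sum_mul_of_lt_of_eq_zero hlam ?_ ?_ hne⟩
  · exact fun t _ h => by exact_mod_cast hlt t (by exact_mod_cast h)
  · exact fun t _ h => by
      exact_mod_cast bicamCrit_inr_eq_zero hsize hqs hqr s r (by exact_mod_cast h)
end

section
/- Consider the multicameral game with n houses H_1,…,H_n of sizes m_1,…,m_n (each m_j ≥ 1) and simple-majority quotas q_j = ⌈(m_j+1)/2⌉. Let r be a member of house H_j and s a member of house H_l with j ≠ l and m_j < m_l, and suppose one of the following holds: m_j and m_l are both odd; m_j and m_l are both even; m_j is even and m_l is odd; or m_j is odd, m_l is even, and m_l > 2·m_j. Then c_r(k) > c_s(k) for every k such that c_r(k) ≠ 0; that is, the member of the smaller house has strictly larger critical numbers. -/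
/-- A coalition in the multicameral game with `n` houses, where house `j` has `m j`
members, is winning iff it contains at least `q j` members of house `j` for every `j`. -/
def multiWinning (n : ℕ) (m : Fin n → ℕ) (q : Fin n → ℕ)
    (S : Finset ((j : Fin n) × Fin (m j))) : Prop :=
  ∀ j : Fin n, q j ≤ (S.filter (fun p => p.1 = j)).card

/-- The number of coalitions of size `k` in which player `i` is critical in the
multicameral game. -/
noncomputable def multiCrit (n : ℕ) (m : Fin n → ℕ) (q : Fin n → ℕ)
    (i : (j : Fin n) × Fin (m j)) (k : ℕ) : ℕ :=
  Set.ncard {S : Finset ((j : Fin n) × Fin (m j)) |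
    S.card = k ∧ i ∈ S ∧ multiWinning n m q S ∧ ¬ multiWinning n m q (S.erase i)}

/-!
Let `x` lie in the smaller house (size `p`, quota `a`) and `y` in the larger one (size `P`,
quota `b`). A coalition of size `k` in which `x` is critical consists of its part `T` outside
these two houses and its traces `A`, `B` on them, and `x` is critical exactly when `#A = a`.
For fixed `T` with `k - #T = a + b + d` this leaves `C(p - 1, a - 1) * C(P, b + d)` choices for
`x` against `C(p, a + d) * C(P - 1, b - 1)` for `y`. At `d = 0` the comparison reads
`p * b < a * P`; going from `d` to `d + 1` multiplies the two counts by
`(P - b - d) / (a + d + 1)` and `(p - a - d) / (b + d + 1)`, and under the parity conditions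
the first factor is at least the second. Summing over `T` gives the theorem.
-/

open Finset

namespace Multicameral

theorem choose_mul_choose_lt_choose_mul_choose {p P a b : ℕ} (ha : 0 < a) (hb : 0 < b)
    (hbP : b ≤ P) (hbase : p * b < a * P)
    (hstep : ∀ d, a + d < p → (p - (a + d)) * (b + d + 1) ≤ (P - (b + d)) * (a + d + 1)) :
    ∀ d, a + d ≤ p →
      p.choose (a + d) * (P - 1).choose (b - 1) < (p - 1).choose (a - 1) * P.choose (b + d) := by
  set α := (p - 1).choose (a - 1)
  set β := (P - 1).choose (b - 1)
  intro d
  induction d with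
  | zero =>
    intro hap
    have ep : p * α = p.choose a * a := by
      simpa [Nat.sub_add_cancel ha, Nat.sub_add_cancel (ha.trans_le hap)] using
        Nat.add_one_mul_choose_eq (p - 1) (a - 1)
    have eP : P * β = P.choose b * b := by
      simpa [Nat.sub_add_cancel hb, Nat.sub_add_cancel (hb.trans_le hbP)] using
        Nat.add_one_mul_choose_eq (P - 1) (b - 1)
    have hαβ : 0 < α * β := Nat.mul_pos (Nat.choose_pos (by omega)) (Nat.choose_pos (by omega))
    apply Nat.lt_of_mul_lt_mul_left (a := a * b)
    rw [add_zero]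
    calc a * b * (p.choose a * β) = (p * b) * (α * β) := by linear_combination (b * β) * ep.symm
      _ < (a * P) * (α * β) := Nat.mul_lt_mul_of_pos_right hbase hαβ
      _ = a * b * (α * P.choose b) := by linear_combination (a * α) * eP
  | succ d ih =>
    intro hap
    have ep := Nat.choose_succ_right_eq p (a + d)
    have eP := Nat.choose_succ_right_eq P (b + d)
    apply Nat.lt_of_mul_lt_mul_left (a := (a + d + 1) * (b + d + 1))
    rw [← add_assoc, ← add_assoc]
    calc (a + d + 1) * (b + d + 1) * (p.choose (a + d + 1) * β)
        = (p.choose (a + d) * β) * ((p - (a + d)) * (b + d + 1)) := by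
          linear_combination (b + d + 1) * β * ep
      _ < (α * P.choose (b + d)) * ((p - (a + d)) * (b + d + 1)) :=
          Nat.mul_lt_mul_of_pos_right (ih (by omega)) (Nat.mul_pos (by omega) (by omega))
      _ ≤ (α * P.choose (b + d)) * ((P - (b + d)) * (a + d + 1)) :=
          Nat.mul_le_mul_left _ (hstep d (by omega))
      _ = (a + d + 1) * (b + d + 1) * (α * P.choose (b + d + 1)) := by
          linear_combination (a + d + 1) * α * eP.symm

def AdmissibleSizes (p P : ℕ) : Prop :=
  (Odd p ∧ Odd P) ∨ (Even p ∧ Even P) ∨ (Even p ∧ Odd P) ∨ (Odd p ∧ Even P ∧ P > 2 * p)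

theorem mul_quota_lt_quota_mul {p P : ℕ} (hlt : p < P) (hc : AdmissibleSizes p P) :
    p * (P / 2 + 1) < (p / 2 + 1) * P := by
  rcases hc with ⟨⟨u, rfl⟩, ⟨v, rfl⟩⟩ | ⟨⟨u, rfl⟩, ⟨v, rfl⟩⟩ | ⟨⟨u, rfl⟩, ⟨v, rfl⟩⟩ |
    ⟨⟨u, rfl⟩, ⟨v, rfl⟩, h⟩ <;>
    simp only [← two_mul, Nat.mul_add_div two_pos, Nat.mul_div_cancel_left _ two_pos] <;>
    norm_num <;> nlinarith

theorem quota_ratio_step {p P d : ℕ} (hlt : p < P) (hc : AdmissibleSizes p P)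
    (hd : p / 2 + 1 + d < p) :
    (p - (p / 2 + 1 + d)) * (P / 2 + 1 + d + 1) ≤ (P - (P / 2 + 1 + d)) * (p / 2 + 1 + d + 1) := by
  obtain ⟨X, hX⟩ : ∃ X, p / 2 + 1 + d + X = p := ⟨_, Nat.add_sub_of_le hd.le⟩
  obtain ⟨Y, hY⟩ : ∃ Y, P / 2 + 1 + d + Y = P := ⟨P - (P / 2 + 1 + d), by omega⟩
  rw [show p - (p / 2 + 1 + d) = X by omega, show P - (P / 2 + 1 + d) = Y by omega]
  rcases hc with ⟨⟨u, rfl⟩, ⟨v, rfl⟩⟩ | ⟨⟨u, rfl⟩, ⟨v, rfl⟩⟩ | ⟨⟨u, rfl⟩, ⟨v, rfl⟩⟩ |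
    ⟨⟨u, rfl⟩, ⟨v, rfl⟩, h⟩ <;>
    simp only [← two_mul, Nat.mul_add_div two_pos, Nat.mul_div_cancel_left _ two_pos] at * <;>
    norm_num at * <;> nlinarith

section Houses

variable {X ι : Type*} [DecidableEq ι] (house : X → ι)

def outside (j l : ι) (S : Finset X) : Finset X :=
  {z ∈ S | house z ≠ j ∧ house z ≠ l}

variable {house}

theorem outside_comm (j l : ι) (S : Finset X) : outside house j l S = outside house l j S := by
  simp only [outside, and_comm]

theorem card_eq_card_outside_add [DecidableEq X] {j l : ι} (hjl : j ≠ l) (S : Finset X) :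
    #S = #(outside house j l S) + #{z ∈ S | house z = j} + #{z ∈ S | house z = l} := by
  rw [← card_union_of_disjoint, ← card_union_of_disjoint]
  · congr 1; ext z; simp only [outside, mem_union, mem_filter]; grind
  · simp only [disjoint_left, outside, mem_filter]; grind
  · simp only [disjoint_left, outside, mem_filter]; grind

theorem filter_outside_eq {j l i : ι} (hij : i ≠ j) (hil : i ≠ l) (S : Finset X) :
    {z ∈ outside house j l S | house z = i} = {z ∈ S | house z = i} := by
  ext z; simp only [outside, mem_filter]; grind

theorem not_forall_le_card_filter_erase_iff [DecidableEq X] {q : ι → ℕ} {S : Finset X} {x : X}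
    (hx : x ∈ S) (hS : ∀ i, q i ≤ #{z ∈ S | house z = i}) :
    (¬ ∀ i, q i ≤ #{z ∈ S.erase x | house z = i}) ↔
      #{z ∈ S | house z = house x} = q (house x) := by
  have hxS : x ∈ {z ∈ S | house z = house x} := mem_filter.2 ⟨hx, rfl⟩
  have hpos := card_pos.2 ⟨x, hxS⟩
  constructor
  · intro h
    push Not at h
    obtain ⟨i, hi⟩ := h
    rw [filter_erase] at hi
    by_cases hix : house x = i
    · subst hix
      rw [card_erase_of_mem hxS] at hi
      have := hS (house x)
      omega
    · have hxi : x ∉ {z ∈ S | house z = i} := fun h => hix (mem_filter.1 h).2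
      rw [erase_eq_of_notMem hxi] at hi
      exact absurd (hS i) (not_le.2 hi)
  · intro h hw
    have := hw (house x)
    rw [filter_erase, card_erase_of_mem hxS] at this
    omega

end Houses

section Game

variable {X ι : Type*} [Fintype X] [DecidableEq X] [DecidableEq ι] (house : X → ι) (q : ι → ℕ)

/-- A member of a winning coalition is critical iff its house is exactly at quota
(`not_forall_le_card_filter_erase_iff`). -/
def critSet [Fintype ι] (x : X) (k : ℕ) : Finset (Finset X) :=
  {S | #S = k ∧ x ∈ S ∧ (∀ i, q i ≤ #{z ∈ S | house z = i}) ∧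
    #{z ∈ S | house z = house x} = q (house x)}

/-- The possible traces `(A, B)` on the houses of `x` and `l` of a coalition of size `k` in
which `x` is critical and which has `t` members in the other houses. -/
def critPairs (x : X) (l : ι) (t k : ℕ) : Finset (Finset X × Finset X) :=
  {AB ∈ ({z | house z = house x} : Finset X).powersetCard (q (house x)) ×ˢ
      ({z | house z = l} : Finset X).powerset | x ∈ AB.1 ∧ q l ≤ #AB.2 ∧ t + #AB.1 + #AB.2 = k}

variable {house q}

theorem mem_critSet [Fintype ι] {x : X} {k : ℕ} {S : Finset X} :
    S ∈ critSet house q x k ↔ #S = k ∧ x ∈ S ∧ (∀ i, q i ≤ #{z ∈ S | house z = i}) ∧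
      #{z ∈ S | house z = house x} = q (house x) := by
  simp [critSet]

theorem mem_critPairs {x : X} {l : ι} {t k : ℕ} {A B : Finset X} :
    (A, B) ∈ critPairs house q x l t k ↔ (∀ z ∈ A, house z = house x) ∧
      (∀ z ∈ B, house z = l) ∧ #A = q (house x) ∧ x ∈ A ∧ q l ≤ #B ∧ t + #A + #B = k := by
  simp only [critPairs, mem_filter, mem_product, mem_powersetCard, mem_powerset, subset_iff,
    mem_filter, mem_univ, true_and]
  tauto

theorem union_mem_critSet [Fintype ι] {x : X} {l : ι} {k : ℕ} (hxl : house x ≠ l)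
    {T A B : Finset X} (hT : ∀ z ∈ T, house z ≠ house x ∧ house z ≠ l)
    (hTq : ∀ i, i ≠ house x → i ≠ l → q i ≤ #{z ∈ T | house z = i})
    (hAB : (A, B) ∈ critPairs house q x l #T k) :
    T ∪ A ∪ B ∈ critSet house q x k ∧ outside house (house x) l (T ∪ A ∪ B) = T := by
  obtain ⟨hA, hB, hAc, hx, hBc, hk⟩ := mem_critPairs.1 hAB
  have hj : {z ∈ T ∪ A ∪ B | house z = house x} = A := by
    ext z; simp only [mem_filter, mem_union]; grind
  have hl : {z ∈ T ∪ A ∪ B | house z = l} = B := by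
    ext z; simp only [mem_filter, mem_union]; grind
  have hi : ∀ i, i ≠ house x → i ≠ l →
      {z ∈ T ∪ A ∪ B | house z = i} = {z ∈ T | house z = i} := by
    intro i hix hil; ext z; simp only [mem_filter, mem_union]; grind
  have hout : outside house (house x) l (T ∪ A ∪ B) = T := by
    ext z; simp only [outside, mem_filter, mem_union]; grind
  refine ⟨mem_critSet.2 ⟨?_, by simp [hx], fun i => ?_, by rw [hj, hAc]⟩, hout⟩
  · rw [card_eq_card_outside_add hxl, hout, hj, hl, hk]
  · by_cases hix : i = house x
    · rw [hix, hj, hAc]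
    by_cases hil : i = l
    · rw [hil, hl]; exact hBc
    rw [hi i hix hil]; exact hTq i hix hil

theorem card_fiber_critSet_eq_card_critPairs [Fintype ι] {x : X} {l : ι} {k : ℕ}
    (hxl : house x ≠ l) {S₀ : Finset X} (hS₀ : ∀ i, q i ≤ #{z ∈ S₀ | house z = i}) :
    #{S ∈ critSet house q x k | outside house (house x) l S = outside house (house x) l S₀} =
      #(critPairs house q x l #(outside house (house x) l S₀) k) := by
  set T := outside house (house x) l S₀
  have hT : ∀ z ∈ T, house z ≠ house x ∧ house z ≠ l := fun z hz => (mem_filter.1 hz).2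
  have hTq : ∀ i, i ≠ house x → i ≠ l → q i ≤ #{z ∈ T | house z = i} := fun i hix hil => by
    rw [filter_outside_eq hix hil]; exact hS₀ i
  clear_value T
  apply card_nbij'
    (fun S : Finset X => ({z ∈ S | house z = house x}, {z ∈ S | house z = l}))
    (fun AB : Finset X × Finset X => T ∪ AB.1 ∪ AB.2)
  · intro S hS
    simp only [coe_filter, mem_critSet] at hS
    obtain ⟨⟨hk, hx, hq, hqx⟩, rfl⟩ := hS
    simp only [mem_coe, mem_critPairs, mem_filter]
    refine ⟨fun _ h => h.2, fun _ h => h.2, hqx, ⟨hx, trivial⟩, hq l, ?_⟩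
    rw [← hk, card_eq_card_outside_add (house := house) hxl S]
  · rintro ⟨A, B⟩ hAB
    exact mem_coe.2 (mem_filter.2 (union_mem_critSet hxl hT hTq hAB))
  · intro S hS
    simp only [coe_filter] at hS
    rw [← hS.2]
    ext z; simp only [outside, mem_filter, mem_union]; grind
  · rintro ⟨A, B⟩ hAB
    simp only [mem_coe, mem_critPairs] at hAB
    obtain ⟨hA, hB, -⟩ := hAB
    simp only [Prod.mk.injEq]
    constructor <;> ext z <;> simp only [mem_filter, mem_union] <;> grind

theorem card_critPairs {x : X} {l : ι} (hq : 0 < q (house x)) (t k : ℕ) :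
    #(critPairs house q x l t k) =
      if t + q (house x) + q l ≤ k then
        (#({z | house z = house x} : Finset X) - 1).choose (q (house x) - 1) *
          (#({z | house z = l} : Finset X)).choose (k - t - q (house x))
      else 0 := by
  split_ifs with htk
  · have : critPairs house q x l t k =
        {A ∈ ({z | house z = house x} : Finset X).powersetCard (q (house x)) | {x} ⊆ A} ×ˢ
          ({z | house z = l} : Finset X).powersetCard (k - t - q (house x)) := by
      ext ⟨A, B⟩
      simp only [critPairs, mem_filter, mem_product, mem_powersetCard, mem_powerset,
        singleton_subset_iff]
      constructor
      · rintro ⟨⟨⟨hA, hAc⟩, hB⟩, hx, hBc, hk⟩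
        exact ⟨⟨⟨hA, hAc⟩, hx⟩, hB, by omega⟩
      · rintro ⟨⟨⟨hA, hAc⟩, hx⟩, hB, hBc⟩
        exact ⟨⟨⟨hA, hAc⟩, hB⟩, hx, by omega, by omega⟩
    rw [this, card_product, card_filter_powersetCard_subset _ _ _ (by simp) (by simpa),
      card_powersetCard, card_singleton]
  · rw [card_eq_zero, eq_empty_iff_forall_notMem]
    rintro ⟨A, B⟩ hAB
    rw [mem_critPairs] at hAB
    omega

theorem card_critPairs_le_and_lt_of_ne_zero {x y : X} {p P : ℕ} (hqx : 0 < q (house x)) (hqy : 0 < q (house y))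
    (hp : #({z | house z = house x} : Finset X) = p)
    (hP : #({z | house z = house y} : Finset X) = P)
    (hbinom : ∀ d, q (house x) + d ≤ p →
      p.choose (q (house x) + d) * (P - 1).choose (q (house y) - 1) <
        (p - 1).choose (q (house x) - 1) * P.choose (q (house y) + d))
    (t k : ℕ) :
    #(critPairs house q y (house x) t k) ≤ #(critPairs house q x (house y) t k) ∧
      (#(critPairs house q x (house y) t k) ≠ 0 →
        #(critPairs house q y (house x) t k) < #(critPairs house q x (house y) t k)) := by
  rw [card_critPairs hqx, card_critPairs hqy, hp, hP]
  split_ifs with hy hx hx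
  · obtain ⟨d, rfl⟩ := Nat.exists_eq_add_of_le hx
    rw [show t + q (house x) + q (house y) + d - t - q (house x) = q (house y) + d by omega,
      show t + q (house x) + q (house y) + d - t - q (house y) = q (house x) + d by omega]
    by_cases hd : q (house x) + d ≤ p
    · have := hbinom d hd
      rw [mul_comm] at this
      exact ⟨this.le, fun _ => this⟩
    · rw [Nat.choose_eq_zero_of_lt (not_le.1 hd), mul_zero]
      exact ⟨Nat.zero_le _, Nat.pos_of_ne_zero⟩
  all_goals omega

theorem card_critSet_lt_card_critSet [Fintype ι] {x y : X} {p P k : ℕ}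
    (hxy : house x ≠ house y) (hqx : 0 < q (house x)) (hqy : 0 < q (house y))
    (hp : #({z | house z = house x} : Finset X) = p)
    (hP : #({z | house z = house y} : Finset X) = P)
    (hbinom : ∀ d, q (house x) + d ≤ p →
      p.choose (q (house x) + d) * (P - 1).choose (q (house y) - 1) <
        (p - 1).choose (q (house x) - 1) * P.choose (q (house y) + d))
    (hk : (critSet house q x k).Nonempty) :
    #(critSet house q y k) < #(critSet house q x k) := by
  set π := outside house (house x) (house y)
  set τ := (critSet house q x k ∪ critSet house q y k).image π
  have hfib : ∀ T ∈ τ,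
      #{S ∈ critSet house q x k | π S = T} = #(critPairs house q x (house y) #T k) ∧
      #{S ∈ critSet house q y k | π S = T} = #(critPairs house q y (house x) #T k) := by
    intro T hT
    obtain ⟨S₀, hS₀, rfl⟩ := mem_image.1 hT
    have hq : ∀ i, q i ≤ #{z ∈ S₀ | house z = i} := by
      rcases mem_union.1 hS₀ with hS₀ | hS₀ <;> exact (mem_critSet.1 hS₀).2.2.1
    refine ⟨card_fiber_critSet_eq_card_critPairs hxy hq, ?_⟩
    simp only [π, outside_comm (house x)]
    exact card_fiber_critSet_eq_card_critPairs hxy.symm hq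
  rw [card_eq_sum_card_fiberwise (f := π) (t := τ)
      (fun S hS => mem_image_of_mem π (mem_union_right _ hS)),
    card_eq_sum_card_fiberwise (f := π) (t := τ)
      (fun S hS => mem_image_of_mem π (mem_union_left _ hS))]
  obtain ⟨S, hS⟩ := hk
  have hSτ : π S ∈ τ := mem_image_of_mem π (mem_union_left _ hS)
  refine sum_lt_sum (fun T hT => ?_) ⟨π S, hSτ, ?_⟩
  · rw [(hfib T hT).1, (hfib T hT).2]
    exact (card_critPairs_le_and_lt_of_ne_zero hqx hqy hp hP hbinom _ _).1
  · rw [(hfib _ hSτ).1, (hfib _ hSτ).2]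
    refine (card_critPairs_le_and_lt_of_ne_zero hqx hqy hp hP hbinom _ _).2 ?_
    rw [← (hfib _ hSτ).1]
    exact card_ne_zero_of_mem (mem_filter.2 ⟨hS, rfl⟩)

end Game

theorem card_filter_sigma_fst_eq (n : ℕ) (m : Fin n → ℕ) (i : Fin n) :
    #({z | z.1 = i} : Finset ((j : Fin n) × Fin (m j))) = m i := by
  rw [← card_fin (m i), ← card_map (Function.Embedding.sigmaMk (β := fun j => Fin (m j)) i)]
  congr 1
  ext ⟨j, a⟩
  simp only [mem_filter, mem_univ, true_and, mem_map, Function.Embedding.sigmaMk_apply]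
  constructor
  · rintro rfl; exact ⟨a, rfl⟩
  · rintro ⟨b, h⟩; cases h; rfl

theorem multiCrit_eq_card_critSet (n : ℕ) (m : Fin n → ℕ) (q : Fin n → ℕ)
    (i : (j : Fin n) × Fin (m j)) (k : ℕ) :
    multiCrit n m q i k = #(critSet Sigma.fst q i k) := by
  have : {S | #S = k ∧ i ∈ S ∧ multiWinning n m q S ∧ ¬ multiWinning n m q (S.erase i)} =
      (critSet Sigma.fst q i k : Set (Finset ((j : Fin n) × Fin (m j)))) := by
    ext S
    simp only [Set.mem_ofPred_eq, mem_coe, mem_critSet, multiWinning]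
    constructor
    · rintro ⟨hk, hi, hw, hnw⟩
      exact ⟨hk, hi, hw, (not_forall_le_card_filter_erase_iff hi hw).1 hnw⟩
    · rintro ⟨hk, hi, hw, hc⟩
      exact ⟨hk, hi, hw, (not_forall_le_card_filter_erase_iff hi hw).2 hc⟩
  rw [multiCrit, this, Set.ncard_coe_finset]

end Multicameral

open Multicameral

theorem multicam_smaller_house_dominates_general (n : ℕ) (m : Fin n → ℕ) (q : Fin n → ℕ)
    (hq : ∀ j, q j = m j / 2 + 1)
    (j l : Fin n) (hjl : j ≠ l) (hsize : m j < m l)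
    (hcase : (Odd (m j) ∧ Odd (m l)) ∨ (Even (m j) ∧ Even (m l)) ∨
      (Even (m j) ∧ Odd (m l)) ∨ (Odd (m j) ∧ Even (m l) ∧ m l > 2 * m j))
    (r : Fin (m j)) (s : Fin (m l)) :
    ∀ k : ℕ, multiCrit n m q ⟨j, r⟩ k ≠ 0 →
      multiCrit n m q ⟨j, r⟩ k > multiCrit n m q ⟨l, s⟩ k := by
  intro k hk
  rw [multiCrit_eq_card_critSet] at hk ⊢
  rw [multiCrit_eq_card_critSet]
  refine card_critSet_lt_card_critSet (house := Sigma.fst) hjl (by simp [hq]) (by simp [hq])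
    (card_filter_sigma_fst_eq n m j) (card_filter_sigma_fst_eq n m l) ?_ (card_ne_zero.1 hk)
  simp only [hq]
  exact choose_mul_choose_lt_choose_mul_choose (by omega) (by omega) (by omega)
    (mul_quota_lt_quota_mul hsize hcase) (fun d hd => quota_ratio_step hsize hcase hd)

/-- Theorem 2 of the paper: in a multicameral legislature with simple-majority quotas
`q j = m j / 2 + 1 = ⌈(m j + 1)/2⌉`, if member `r` belongs to a smaller house `H j` and
member `s` to a larger house `H l` and one of the four parity cases holds, then the
critical numbers of `r` strictly dominate those of `s`. -/
theorem multicam_smaller_house_dominates (n : ℕ) (m : Fin n → ℕ) (q : Fin n → ℕ)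
    (hm : ∀ j, 1 ≤ m j) (hq : ∀ j, q j = m j / 2 + 1)
    (j l : Fin n) (hjl : j ≠ l) (hsize : m j < m l)
    (hcase : (Odd (m j) ∧ Odd (m l)) ∨ (Even (m j) ∧ Even (m l)) ∨
      (Even (m j) ∧ Odd (m l)) ∨ (Odd (m j) ∧ Even (m l) ∧ m l > 2 * m j))
    (r : Fin (m j)) (s : Fin (m l)) :
    ∀ k : ℕ, multiCrit n m q ⟨j, r⟩ k ≠ 0 →
      multiCrit n m q ⟨j, r⟩ k > multiCrit n m q ⟨l, s⟩ k :=
  multicam_smaller_house_dominates_general n m q hq j l hjl hsize hcase r s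
end

section
/- In the US legislative game: (a) for every k, if c_p(k) = 0 then c_v(k) = c_s(k) = c_r(k) = 0; (b) for every k with c_p(k) ≠ 0, c_p(k) > c_v(k). -/
/-- The players of the US legislative game: the president, the vice president,
100 senators, and 435 representatives. -/
inductive USPlayer where
  | pres : USPlayer
  | vp : USPlayer
  | sen : Fin 100 → USPlayer
  | rep : Fin 435 → USPlayer
  deriving DecidableEq

/-- Whether a player is a senator. -/
def USPlayer.isSen : USPlayer → Bool
  | .sen _ => true
  | _ => false

/-- Whether a player is a representative. -/
def USPlayer.isRep : USPlayer → Bool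
  | .rep _ => true
  | _ => false

/-- The number of senators in a coalition. -/
def numSen (S : Finset USPlayer) : ℕ := (S.filter (fun p => p.isSen)).card

/-- The number of representatives in a coalition. -/
def numRep (S : Finset USPlayer) : ℕ := (S.filter (fun p => p.isRep)).card

/-- A coalition is winning in the US legislative game iff either the president is in it
together with at least 218 representatives and either at least 51 senators or the vice
president and at least 50 senators; or it contains at least 67 senators and at least
290 representatives (veto override). -/
def usWinning (S : Finset USPlayer) : Prop :=
  (USPlayer.pres ∈ S ∧ 218 ≤ numRep S ∧
    (51 ≤ numSen S ∨ (USPlayer.vp ∈ S ∧ 50 ≤ numSen S))) ∨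
  (67 ≤ numSen S ∧ 290 ≤ numRep S)

/-- The number of coalitions of size `k` in which player `i` is critical in the US
legislative game. -/
noncomputable def usCrit (i : USPlayer) (k : ℕ) : ℕ :=
  Set.ncard {S : Finset USPlayer |
    S.card = k ∧ i ∈ S ∧ usWinning S ∧ ¬ usWinning (S.erase i)}
/-!
Removing a player lowers the number of senators and of representatives by at most one. So if
some player `i ≠ P` is critical in `S` while `P` is not, then `S` wins only by veto override,
`P ∉ S`, and swapping `i` for `P` gives a coalition of the same size winning with `P` (at least
66 senators and 289 representatives) but not by override: `P` is critical there. This gives (a).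
For (b), every coalition in which `V` is critical has `P` critical as well, with exactly 50
senators; swapping `V` for an absent senator yields a coalition where `P` is critical and `V`
is absent, so the inclusion is strict.
-/

namespace Finset

variable {α : Type*} [DecidableEq α]

theorem card_filter_le_card_filter_erase_add_one (s : Finset α) (a : α) (P : α → Prop)
    [DecidablePred P] : (s.filter P).card ≤ ((s.erase a).filter P).card + 1 := by
  rw [filter_erase]
  have := (s.filter P).pred_card_le_card_erase (a := a)
  omega

theorem card_insert_erase_of_notMem {s : Finset α} {a b : α} (ha : a ∉ s) (hb : b ∈ s) :
    (insert a (s.erase b)).card = s.card := by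
  rw [card_insert_of_notMem fun h => ha (mem_of_mem_erase h), card_erase_add_one hb]

end Finset

deriving instance Fintype for USPlayer

namespace USPlayer

def IsCritical (i : USPlayer) (S : Finset USPlayer) : Prop :=
  i ∈ S ∧ usWinning S ∧ ¬ usWinning (S.erase i)

def Overrides (S : Finset USPlayer) : Prop :=
  67 ≤ numSen S ∧ 290 ≤ numRep S

theorem usCrit_eq_ncard (i : USPlayer) (k : ℕ) :
    usCrit i k = {S : Finset USPlayer | S.card = k ∧ i.IsCritical S}.ncard :=
  rfl

section Counting

variable (S : Finset USPlayer) (p : USPlayer)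

theorem numSen_le_numSen_erase_add_one : numSen S ≤ numSen (S.erase p) + 1 :=
  S.card_filter_le_card_filter_erase_add_one p _

theorem numRep_le_numRep_erase_add_one : numRep S ≤ numRep (S.erase p) + 1 :=
  S.card_filter_le_card_filter_erase_add_one p _

variable {p}

theorem numSen_erase_of_not_isSen (h : p.isSen = false) :
    numSen (S.erase p) = numSen S := by
  rw [numSen, Finset.filter_erase, Finset.erase_eq_of_notMem (by simp [h])]; rfl

theorem numRep_erase_of_not_isRep (h : p.isRep = false) :
    numRep (S.erase p) = numRep S := by
  rw [numRep, Finset.filter_erase, Finset.erase_eq_of_notMem (by simp [h])]; rfl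

theorem numSen_insert_of_not_isSen (h : p.isSen = false) :
    numSen (insert p S) = numSen S := by
  rw [numSen, Finset.filter_insert, if_neg (by simp [h])]; rfl

theorem numRep_insert_of_not_isRep (h : p.isRep = false) :
    numRep (insert p S) = numRep S := by
  rw [numRep, Finset.filter_insert, if_neg (by simp [h])]; rfl

theorem numSen_insert_sen {s : Fin 100} (hs : sen s ∉ S) :
    numSen (insert (sen s) S) = numSen S + 1 := by
  rw [numSen, Finset.filter_insert, if_pos (by rfl),
    Finset.card_insert_of_notMem (by simp [hs])]; rfl

theorem exists_sen_notMem (h : numSen S < 100) : ∃ s : Fin 100, sen s ∉ S := by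
  by_contra! hall
  have hsub : Finset.univ.map ⟨sen, fun _ _ h => sen.inj h⟩ ⊆ S.filter (fun p => p.isSen) :=
    fun x hx => by
      obtain ⟨s, -, rfl⟩ := Finset.mem_map.mp hx
      exact Finset.mem_filter.mpr ⟨hall s, rfl⟩
  have := Finset.card_le_card hsub
  rw [Finset.card_map, Finset.card_univ, Fintype.card_fin] at this
  exact absurd h (not_lt.mpr this)

end Counting

section Winning

variable {S : Finset USPlayer}

theorem usWinning_of_pres_mem (hp : pres ∈ S) (hs : 51 ≤ numSen S) (hr : 218 ≤ numRep S) :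
    usWinning S :=
  Or.inl ⟨hp, hr, Or.inl hs⟩

theorem usWinning_erase_pres_iff : usWinning (S.erase pres) ↔ Overrides S := by
  rw [usWinning, Overrides, numSen_erase_of_not_isSen S rfl, numRep_erase_of_not_isRep S rfl]
  simp

theorem isCritical_pres_iff : pres.IsCritical S ↔ usWinning S ∧ ¬ Overrides S := by
  rw [IsCritical, usWinning_erase_pres_iff]
  refine ⟨fun h => h.2, fun ⟨hw, ho⟩ => ⟨?_, hw, ho⟩⟩
  rcases hw with h | h
  exacts [h.1, absurd h ho]

theorem usWinning_insert_pres_erase (i : USPlayer) (ho : Overrides S) :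
    usWinning (insert pres (S.erase i)) := by
  obtain ⟨hs, hr⟩ := ho
  have := numSen_le_numSen_erase_add_one S i
  have := numRep_le_numRep_erase_add_one S i
  refine usWinning_of_pres_mem (Finset.mem_insert_self _ _) ?_ ?_
  · rw [numSen_insert_of_not_isSen _ rfl]; omega
  · rw [numRep_insert_of_not_isRep _ rfl]; omega

end Winning

section Critical

variable {S : Finset USPlayer} {i : USPlayer}

theorem IsCritical.pres_of_pres_mem (hi : i.IsCritical S) (hp : pres ∈ S) :
    pres.IsCritical S := by
  obtain rfl | hne := eq_or_ne i pres
  · exact hi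
  refine isCritical_pres_iff.mpr ⟨hi.2.1, fun ho => hi.2.2 ?_⟩
  have hw := usWinning_insert_pres_erase i ho
  rwa [Finset.insert_eq_of_mem (Finset.mem_erase.mpr ⟨hne.symm, hp⟩)] at hw

theorem IsCritical.pres_insert_erase (hi : i.IsCritical S) (hp : pres ∉ S) :
    pres.IsCritical (insert pres (S.erase i)) := by
  have ho : Overrides S := by
    rcases hi.2.1 with h | h
    exacts [absurd h.1 hp, h]
  refine ⟨Finset.mem_insert_self _ _, usWinning_insert_pres_erase i ho, ?_⟩
  rw [Finset.erase_insert fun h => hp (Finset.mem_of_mem_erase h)]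
  exact hi.2.2

theorem IsCritical.exists_pres (hi : i.IsCritical S) :
    ∃ T : Finset USPlayer, T.card = S.card ∧ pres.IsCritical T := by
  by_cases hp : pres ∈ S
  · exact ⟨S, rfl, hi.pres_of_pres_mem hp⟩
  · exact ⟨_, Finset.card_insert_erase_of_notMem hp hi.1, hi.pres_insert_erase hp⟩

theorem IsCritical.vp_spec (hv : vp.IsCritical S) :
    pres ∈ S ∧ numSen S = 50 ∧ 218 ≤ numRep S := by
  obtain ⟨-, hw, hl⟩ := hv
  rw [usWinning, numSen_erase_of_not_isSen S rfl, numRep_erase_of_not_isRep S rfl] at hl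
  rcases hw with ⟨hp, hr, hs⟩ | ho
  · have hs51 : ¬ 51 ≤ numSen S := fun h =>
      hl (Or.inl ⟨Finset.mem_erase_of_ne_of_mem (by simp) hp, hr, Or.inl h⟩)
    refine ⟨hp, ?_, hr⟩
    rcases hs with h | ⟨-, h⟩ <;> omega
  · exact absurd (Or.inr ho) hl

theorem IsCritical.pres_of_vp (hv : vp.IsCritical S) : pres.IsCritical S :=
  hv.pres_of_pres_mem hv.vp_spec.1

theorem IsCritical.pres_insert_sen_erase_vp (hv : vp.IsCritical S) {s : Fin 100}
    (hs : sen s ∉ S) : pres.IsCritical (insert (sen s) (S.erase vp)) := by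
  obtain ⟨hp, hs50, hr218⟩ := hv.vp_spec
  have hsen : numSen (insert (sen s) (S.erase vp)) = 51 := by
    rw [numSen_insert_sen _ fun h => hs (Finset.mem_of_mem_erase h),
      numSen_erase_of_not_isSen S rfl, hs50]
  have hrep : numRep (insert (sen s) (S.erase vp)) = numRep S := by
    rw [numRep_insert_of_not_isRep _ rfl, numRep_erase_of_not_isRep S rfl]
  refine isCritical_pres_iff.mpr ⟨usWinning_of_pres_mem ?_ (by omega) (by omega), ?_⟩
  · exact Finset.mem_insert_of_mem (Finset.mem_erase_of_ne_of_mem (by simp) hp)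
  · rw [Overrides, hsen]; omega

end Critical

theorem usCrit_eq_zero_of_usCrit_pres_eq_zero {k : ℕ} (h : usCrit pres k = 0) (i : USPlayer) :
    usCrit i k = 0 := by
  rw [usCrit_eq_ncard, Set.ncard_eq_zero (Set.toFinite _)] at h ⊢
  refine Set.eq_empty_of_forall_notMem fun S ⟨hk, hi⟩ => ?_
  obtain ⟨T, hT, hpT⟩ := hi.exists_pres
  exact h.subset ⟨hT.trans hk, hpT⟩

theorem usCrit_vp_lt_usCrit_pres {k : ℕ} (h : usCrit pres k ≠ 0) :
    usCrit vp k < usCrit pres k := by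
  rw [usCrit_eq_ncard] at h ⊢
  rw [usCrit_eq_ncard]
  obtain ⟨S, hk, hpS⟩ := Set.nonempty_of_ncard_ne_zero h
  have hsub : {T : Finset USPlayer | T.card = k ∧ vp.IsCritical T} ⊆
      {T | T.card = k ∧ pres.IsCritical T} := fun T hT => ⟨hT.1, hT.2.pres_of_vp⟩
  refine Set.ncard_lt_ncard ((Set.ssubset_iff_of_subset hsub).mpr ?_) (Set.toFinite _)
  by_cases hvS : vp.IsCritical S
  · obtain ⟨s, hs⟩ := exists_sen_notMem S (by rw [hvS.vp_spec.2.1]; omega)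
    refine ⟨_, ⟨?_, hvS.pres_insert_sen_erase_vp hs⟩, fun hT => ?_⟩
    · rw [Finset.card_insert_erase_of_notMem hs hvS.1, hk]
    · simpa using hT.2.1
  · exact ⟨S, ⟨hk, hpS⟩, fun hS => hvS hS.2⟩

end USPlayer

/-- Proposition 3 (a), (b) of the paper: (a) if the president's critical number vanishes
at `k`, so do those of the vice president, every senator, and every representative;
(b) wherever the president's critical number is nonzero it strictly exceeds the vice
president's. -/
theorem us_president_dominates_vp :
    (∀ k : ℕ, usCrit USPlayer.pres k = 0 →
      usCrit USPlayer.vp k = 0 ∧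
      (∀ s : Fin 100, usCrit (USPlayer.sen s) k = 0) ∧
      (∀ r : Fin 435, usCrit (USPlayer.rep r) k = 0)) ∧
    (∀ k : ℕ, usCrit USPlayer.pres k ≠ 0 →
      usCrit USPlayer.pres k > usCrit USPlayer.vp k) :=
  ⟨fun _ h => ⟨USPlayer.usCrit_eq_zero_of_usCrit_pres_eq_zero h _,
      fun _ => USPlayer.usCrit_eq_zero_of_usCrit_pres_eq_zero h _,
      fun _ => USPlayer.usCrit_eq_zero_of_usCrit_pres_eq_zero h _⟩,
    fun _ h => USPlayer.usCrit_vp_lt_usCrit_pres h⟩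
end

section
/- In the US legislative game: if c_s(k) = 0 then c_v(k) = 0; if c_s(k) ≠ 0 then 270 ≤ k ≤ 503, and moreover (i) for every k with 270 ≤ k ≤ 356, c_s(k) = c_v(k), and (ii) for every k with 357 ≤ k ≤ 503, c_s(k) > c_v(k). -/
/-!
Swapping the vice president `V` with the senator `s` preserves coalition sizes. A coalition that
wins with `V` still wins with `s` in his place, and this makes the swap an injection from the
coalitions in which `V` is critical into those in which `s` is critical. A veto override needs
at least 67 + 290 = 357 players; in smaller coalitions `V`'s tie-breaking vote counts as much
as a 51st senator, so there the swap works both ways and the two counts agree. From 357 players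
on, a veto-override coalition without the president in which `s` is the 67th senator has `s`
critical, but it is not in the image, since every coalition in which `V` is critical contains the
president. Every winning coalition has at least 270 players and every losing one at most 502.
-/

open Finset

variable {α : Type*} [DecidableEq α]

lemma Finset.map_swap_of_mem_of_mem {i j : α} {S : Finset α} (hi : i ∈ S) (hj : j ∈ S) :
    S.map (Equiv.swap i j).toEmbedding = S := by
  ext x
  rw [mem_map_equiv, Equiv.symm_swap]
  rcases eq_or_ne x i with rfl | hxi
  · simp [hi, hj]
  rcases eq_or_ne x j with rfl | hxj
  · simp [hi, hj]
  rw [Equiv.swap_apply_of_ne_of_ne hxi hxj]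

lemma Finset.map_swap_of_notMem_of_mem {i j : α} {S : Finset α} (hi : i ∉ S) (hj : j ∈ S) :
    S.map (Equiv.swap i j).toEmbedding = insert i (S.erase j) := by
  ext x
  rw [mem_map_equiv, Equiv.symm_swap]
  rcases eq_or_ne x i with rfl | hxi
  · simp [hj]
  rcases eq_or_ne x j with rfl | hxj
  · simp [hi, hxi]
  rw [Equiv.swap_apply_of_ne_of_ne hxi hxj]
  simp [hxi, hxj]

section SimpleGame

variable (W : Finset α → Prop)

def critSet (i : α) (k : ℕ) : Set (Finset α) :=
  {S | S.card = k ∧ i ∈ S ∧ W S ∧ ¬ W (S.erase i)}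

def DesirableBelow (i j : α) (n : ℕ) : Prop :=
  ∀ R : Finset α, i ∉ R → j ∉ R → R.card < n → W (insert j R) → W (insert i R)

variable {W} {i j : α} {k : ℕ}

theorem DesirableBelow.mapsTo_critSet (h : DesirableBelow W i j k) :
    Set.MapsTo (map (Equiv.swap i j).toEmbedding) (critSet W j k) (critSet W i k) := by
  rintro S ⟨rfl, hj, hwin, hlose⟩
  refine ⟨card_map _, ?_⟩
  by_cases hi : i ∈ S
  · rw [map_swap_of_mem_of_mem hi hj]
    refine ⟨hi, hwin, fun hwin' => hlose ?_⟩
    have hij : i ≠ j := by rintro rfl; exact hlose hwin'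
    have hRi : insert i ((S.erase i).erase j) = S.erase j := by
      rw [erase_right_comm, insert_erase (mem_erase.2 ⟨hij, hi⟩)]
    have hRj : insert j ((S.erase i).erase j) = S.erase i :=
      insert_erase (mem_erase.2 ⟨hij.symm, hj⟩)
    have hRcard : ((S.erase i).erase j).card < S.card :=
      card_erase_le.trans_lt (card_erase_lt_of_mem hi)
    rw [← hRi]
    exact h _ (by simp) (notMem_erase j _) hRcard (by rwa [hRj])
  · have hiR : i ∉ S.erase j := fun h => hi (mem_of_mem_erase h)
    rw [map_swap_of_notMem_of_mem hi hj, erase_insert hiR]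
    exact ⟨mem_insert_self _ _, h _ hiR (notMem_erase j S) (card_erase_lt_of_mem hj)
      (by rwa [insert_erase hj]), hlose⟩

variable [Finite α]

theorem DesirableBelow.ncard_critSet_le (h : DesirableBelow W i j k) :
    (critSet W j k).ncard ≤ (critSet W i k).ncard :=
  Set.ncard_le_ncard_of_injOn _ h.mapsTo_critSet (map_injective _).injOn

theorem DesirableBelow.ncard_critSet_lt (h : DesirableBelow W i j k) {p : α} (hpi : p ≠ i)
    (hpj : p ≠ j) (hj : ∀ S ∈ critSet W j k, p ∈ S) (hi : ∃ S ∈ critSet W i k, p ∉ S) :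
    (critSet W j k).ncard < (critSet W i k).ncard := by
  obtain ⟨T, hT, hpT⟩ := hi
  rw [← (map_injective _).injOn.ncard_image]
  refine Set.ncard_lt_ncard ⟨h.mapsTo_critSet.image_subset, fun hsub => ?_⟩
  obtain ⟨S, hS, rfl⟩ := hsub hT
  rw [mem_map_equiv, Equiv.symm_swap, Equiv.swap_apply_of_ne_of_ne hpi hpj] at hpT
  exact hpT (hj S hS)

end SimpleGame

deriving instance Fintype for USPlayer

open USPlayer

lemma USPlayer.sen_injective : Function.Injective sen := fun _ _ => sen.inj

lemma USPlayer.rep_injective : Function.Injective rep := fun _ _ => rep.inj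

section Counting

variable {S : Finset USPlayer} {p : USPlayer}

lemma numSen_insert (h : p ∉ S) : numSen (insert p S) = numSen S + p.isSen.toNat := by
  rw [numSen, numSen, filter_insert]
  cases p.isSen
  · simp
  · simp [card_insert_of_notMem, h]

lemma numRep_insert (h : p ∉ S) : numRep (insert p S) = numRep S + p.isRep.toNat := by
  rw [numRep, numRep, filter_insert]
  cases p.isRep
  · simp
  · simp [card_insert_of_notMem, h]

lemma numSen_erase_add (h : p ∈ S) : numSen (S.erase p) + p.isSen.toNat = numSen S := by
  rw [← numSen_insert (notMem_erase p S), insert_erase h]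

lemma numRep_erase_add (h : p ∈ S) : numRep (S.erase p) + p.isRep.toNat = numRep S := by
  rw [← numRep_insert (notMem_erase p S), insert_erase h]

lemma numSen_le (S : Finset USPlayer) : numSen S ≤ 100 :=
  calc numSen S ≤ (univ.image sen).card := card_le_card fun x hx => by
        obtain ⟨-, hx⟩ := mem_filter.1 hx
        cases x <;> simp_all [isSen]
    _ = 100 := by simp [card_image_of_injective _ sen_injective]

lemma numRep_le (S : Finset USPlayer) : numRep S ≤ 435 :=
  calc numRep S ≤ (univ.image rep).card := card_le_card fun x hx => by
        obtain ⟨-, hx⟩ := mem_filter.1 hx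
        cases x <;> simp_all [isRep]
    _ = 435 := by simp [card_image_of_injective _ rep_injective]

lemma card_eq_numSen_add_numRep (S : Finset USPlayer) : S.card =
    (if pres ∈ S then 1 else 0) + (if vp ∈ S then 1 else 0) + numSen S + numRep S := by
  induction S using Finset.induction_on with
  | empty => simp [numSen, numRep]
  | insert a S ha ih =>
    rw [card_insert_of_notMem ha, numSen_insert ha, numRep_insert ha]
    cases a <;> simp [ha, ih, isSen, isRep] <;> omega

end Counting

section Game

variable {S : Finset USPlayer} {s : Fin 100} {i : USPlayer} {k : ℕ}

lemma le_card_of_usWinning (h : usWinning S) : 270 ≤ S.card := by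
  have hcard := card_eq_numSen_add_numRep S
  rcases h with ⟨hp, hr, hs | ⟨hv, hs⟩⟩ | ⟨hs, hr⟩
  · simp only [hp, if_true] at hcard; omega
  · simp only [hp, hv, if_true] at hcard; omega
  · omega

lemma card_le_of_not_usWinning (h : ¬ usWinning S) : S.card ≤ 502 := by
  have hcard := card_eq_numSen_add_numRep S
  have := numSen_le S
  have := numRep_le S
  simp only [usWinning, not_or, not_and, not_le] at h
  by_cases hp : pres ∈ S <;> by_cases hv : vp ∈ S <;> simp_all <;> omega

lemma le_and_le_of_mem_critSet (hS : S ∈ critSet usWinning i k) : 270 ≤ k ∧ k ≤ 503 := by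
  obtain ⟨rfl, hi, hwin, hlose⟩ := hS
  have := card_erase_add_one hi
  have := card_le_of_not_usWinning hlose
  exact ⟨le_card_of_usWinning hwin, by omega⟩

lemma desirableBelow_sen_vp (s : Fin 100) (k : ℕ) : DesirableBelow usWinning (sen s) vp k := by
  intro R hs hv _ h
  have hsv : numSen (insert vp R) = numSen R := numSen_insert hv
  have hrv : numRep (insert vp R) = numRep R := numRep_insert hv
  have hss : numSen (insert (sen s) R) = numSen R + 1 := numSen_insert hs
  have hrs : numRep (insert (sen s) R) = numRep R := numRep_insert hs
  rcases h with ⟨hp, hr, h50⟩ | ⟨h67, hr⟩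
  · have : 50 ≤ numSen R := by rcases h50 with h50 | ⟨-, h50⟩ <;> omega
    exact Or.inl ⟨by simpa using hp, by omega, Or.inl (by omega)⟩
  · exact Or.inr ⟨by omega, by omega⟩

lemma desirableBelow_vp_sen (hk : k ≤ 356) : DesirableBelow usWinning vp (sen s) k := by
  intro R hv hs hR h
  have hsv : numSen (insert vp R) = numSen R := numSen_insert hv
  have hrv : numRep (insert vp R) = numRep R := numRep_insert hv
  have hss : numSen (insert (sen s) R) = numSen R + 1 := numSen_insert hs
  have hrs : numRep (insert (sen s) R) = numRep R := numRep_insert hs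
  rcases h with ⟨hp, hr, h51 | ⟨hv', -⟩⟩ | ⟨h67, hr⟩
  · exact Or.inl ⟨by simpa using hp, by omega, Or.inr ⟨mem_insert_self _ _, by omega⟩⟩
  · simp [hv] at hv'
  · have hcard := card_eq_numSen_add_numRep R
    split_ifs at hcard <;> omega

lemma pres_mem_of_mem_critSet_vp (hS : S ∈ critSet usWinning vp k) : pres ∈ S := by
  obtain ⟨-, hv, hwin, hlose⟩ := hS
  have hs : numSen (S.erase vp) = numSen S := numSen_erase_add hv
  have hr : numRep (S.erase vp) = numRep S := numRep_erase_add hv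
  by_contra hp
  rcases hwin with ⟨hp', -⟩ | hveto
  · exact hp hp'
  · exact hlose (Or.inr (hs ▸ hr ▸ hveto))

lemma mem_critSet_sen_of_veto (hs : sen s ∈ S) (hp : pres ∉ S) (h67 : numSen S = 67)
    (hr : 290 ≤ numRep S) : S ∈ critSet usWinning (sen s) S.card := by
  have hs' : numSen (S.erase (sen s)) + 1 = numSen S := numSen_erase_add hs
  refine ⟨rfl, hs, Or.inr ⟨h67.ge, hr⟩, ?_⟩
  rintro (⟨hp', -⟩ | ⟨h67', -⟩)
  · exact hp (mem_of_mem_erase hp')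
  · omega

lemma exists_veto_coalition (s : Fin 100) {n : ℕ} (hn : n ≤ 435) :
    ∃ T, sen s ∈ T ∧ pres ∉ T ∧ vp ∉ T ∧ numSen T = 67 ∧ numRep T = n := by
  obtain ⟨A, hsA, -, hA⟩ := exists_subsuperset_card_eq (singleton_subset_iff.2 (mem_univ s))
    (by simp : #{s} ≤ 67) (by simp : 67 ≤ #(univ : Finset (Fin 100)))
  obtain ⟨B, -, hB⟩ := exists_subset_card_eq (s := (univ : Finset (Fin 435))) (by simpa using hn)
  refine ⟨A.image sen ∪ B.image rep, by simpa using singleton_subset_iff.1 hsA, by simp, by simp,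
    ?_, ?_⟩
  · rw [numSen, filter_union, filter_image, filter_image]
    simp [isSen, card_image_of_injective _ sen_injective, hA]
  · rw [numRep, filter_union, filter_image, filter_image]
    simp [isRep, card_image_of_injective _ rep_injective, hB]

lemma exists_mem_critSet_sen_pres_notMem (hk : 357 ≤ k) (hk' : k ≤ 503) :
    ∃ S ∈ critSet usWinning (sen s) k, pres ∉ S := by
  obtain ⟨T, hs, hp, hv, h67, hr⟩ := exists_veto_coalition s (min_le_right (k - 67) 435)
  have hcard := card_eq_numSen_add_numRep T
  simp only [hp, hv, if_false, h67, hr] at hcard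
  rcases (by omega : k ≤ 502 ∨ k = 503) with hk' | rfl
  · refine ⟨T, ?_, hp⟩
    convert mem_critSet_sen_of_veto hs hp h67 (by omega)
    omega
  -- all 435 representatives are already in `T`, so the vice president fills the last seat
  · have hp' : pres ∉ insert vp T := by simp [hp]
    have h67' : numSen (insert vp T) = 67 := numSen_insert hv ▸ h67
    have hr' : numRep (insert vp T) = numRep T := numRep_insert hv
    refine ⟨insert vp T, ?_, hp'⟩
    convert mem_critSet_sen_of_veto (mem_insert_of_mem hs) hp' h67' (by omega)
    rw [card_insert_of_notMem hv]
    omega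

end Game

/-- Proposition 4 of the paper: comparing a senator and the vice president. If the
senator's critical number vanishes at `k` then so does the vice president's; if it is
nonzero then `270 ≤ k ≤ 503`, with equality of critical numbers for `270 ≤ k ≤ 356`
and strict dominance of the senator for `357 ≤ k ≤ 503`. -/
theorem us_senator_vs_vp (s : Fin 100) :
    (∀ k : ℕ, usCrit (USPlayer.sen s) k = 0 → usCrit USPlayer.vp k = 0) ∧
    (∀ k : ℕ, usCrit (USPlayer.sen s) k ≠ 0 → 270 ≤ k ∧ k ≤ 503) ∧
    (∀ k : ℕ, 270 ≤ k → k ≤ 356 → usCrit (USPlayer.sen s) k = usCrit USPlayer.vp k) ∧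
    (∀ k : ℕ, 357 ≤ k → k ≤ 503 → usCrit (USPlayer.sen s) k > usCrit USPlayer.vp k) := by
  have hle (k : ℕ) : usCrit vp k ≤ usCrit (sen s) k :=
    (desirableBelow_sen_vp s k).ncard_critSet_le
  refine ⟨fun k h => Nat.eq_zero_of_le_zero (h ▸ hle k), fun k h => ?_, fun k _ hk => ?_,
    fun k hk hk' => ?_⟩
  · obtain ⟨S, hS⟩ := Set.nonempty_of_ncard_ne_zero h
    exact le_and_le_of_mem_critSet hS
  · exact (desirableBelow_vp_sen hk).ncard_critSet_le.antisymm (hle k)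
  · exact (desirableBelow_sen_vp s k).ncard_critSet_lt (by simp) (by simp)
      (fun _ => pres_mem_of_mem_critSet_vp) (exists_mem_critSet_sen_pres_notMem hk hk')
end

section
/- In the US legislative game: (a) for every k, if c_v(k) = 0 then c_r(k) = 0; (b) for every k with 270 ≤ k ≤ 356 or 380 ≤ k ≤ 487, c_v(k) > c_r(k), and for every k with 357 ≤ k ≤ 379, c_r(k) > c_v(k). -/
/-! Removing the vice president from a winning coalition makes it lose only when the president
is in it together with exactly 50 senators and at least 218 representatives, so
`c_v(k) = C(100,50) C(435,k-52)` for `k ≥ 270` and `0` otherwise. A representative is critical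
exactly when there are precisely 218 representatives and the bill passes with the president
(50 senators with the vice president, 51 without), or precisely 290 representatives and at least
67 senators without the president. Counting the four cases gives `c_r(k)` as a combination of
binomial coefficients, which vanishes for `k < 270` and for `k > 391`. Part (a) follows, and
part (b) is a finite comparison of the two closed forms. -/

open Finset

namespace USPlayer

def equivSum : USPlayer ≃ Unit ⊕ Unit ⊕ Fin 100 ⊕ Fin 435 where
  toFun
    | pres => .inl ()
    | vp => .inr (.inl ())
    | sen i => .inr (.inr (.inl i))
    | rep j => .inr (.inr (.inr j))
  invFun
    | .inl _ => pres
    | .inr (.inl _) => vp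
    | .inr (.inr (.inl i)) => sen i
    | .inr (.inr (.inr j)) => rep j
  left_inv x := by cases x <;> rfl
  right_inv x := by rcases x with _ | _ | _ | _ <;> rfl

instance : Fintype USPlayer := .ofEquiv _ equivSum.symm

end USPlayer

open USPlayer

lemma numSen_erase_of_isSen_eq_false {x : USPlayer} (hx : x.isSen = false) (S : Finset USPlayer) :
    numSen (S.erase x) = numSen S := by
  rw [numSen, numSen, filter_erase, erase_eq_of_notMem (by simp [hx])]

lemma numRep_erase_of_isRep_eq_false {x : USPlayer} (hx : x.isRep = false) (S : Finset USPlayer) :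
    numRep (S.erase x) = numRep S := by
  rw [numRep, numRep, filter_erase, erase_eq_of_notMem (by simp [hx])]

lemma numRep_erase_rep {S : Finset USPlayer} {r : Fin 435} (hr : rep r ∈ S) :
    numRep (S.erase (rep r)) = numRep S - 1 := by
  rw [numRep, numRep, filter_erase,
    card_erase_of_mem (mem_filter.2 ⟨hr, rfl⟩ : rep r ∈ S.filter (·.isRep))]

lemma vp_critical_iff (S : Finset USPlayer) :
    vp ∈ S ∧ usWinning S ∧ ¬ usWinning (S.erase vp) ↔
      vp ∈ S ∧ pres ∈ S ∧ numSen S = 50 ∧ 218 ≤ numRep S := by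
  simp only [usWinning, numSen_erase_of_isSen_eq_false (x := vp) rfl,
    numRep_erase_of_isRep_eq_false (x := vp) rfl, mem_erase, ne_eq, reduceCtorEq,
    not_false_eq_true, true_and, not_true_eq_false, false_and]
  grind

lemma rep_critical_iff (S : Finset USPlayer) (r : Fin 435) :
    rep r ∈ S ∧ usWinning S ∧ ¬ usWinning (S.erase (rep r)) ↔
      rep r ∈ S ∧ ((pres ∈ S ∧ numRep S = 218 ∧
          (vp ∈ S ∧ 50 ≤ numSen S ∨ vp ∉ S ∧ 51 ≤ numSen S)) ∨
        (pres ∉ S ∧ numRep S = 290 ∧ 67 ≤ numSen S)) := by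
  by_cases hr : rep r ∈ S
  · have : 0 < numRep S := card_pos.2 ⟨rep r, mem_filter.2 ⟨hr, rfl⟩⟩
    simp only [usWinning, numSen_erase_of_isSen_eq_false (x := rep r) rfl, numRep_erase_rep hr,
      mem_erase, ne_eq, reduceCtorEq, not_false_eq_true, true_and, hr]
    grind
  · simp [hr]

def usCoalition (p v : Bool) (A : Finset (Fin 100)) (B : Finset (Fin 435)) : Finset USPlayer :=
  ((cond p univ ∅).disjSum ((cond v univ ∅).disjSum (A.disjSum B))).map equivSum.symm.toEmbedding

section usCoalition

variable {p v : Bool} {A : Finset (Fin 100)} {B : Finset (Fin 435)}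

@[simp] lemma pres_mem_usCoalition : pres ∈ usCoalition p v A B ↔ p := by
  cases p <;> simp [usCoalition, mem_map_equiv, equivSum]

@[simp] lemma vp_mem_usCoalition : vp ∈ usCoalition p v A B ↔ v := by
  cases v <;> simp [usCoalition, mem_map_equiv, equivSum]

@[simp] lemma sen_mem_usCoalition {i : Fin 100} : sen i ∈ usCoalition p v A B ↔ i ∈ A := by
  simp [usCoalition, mem_map_equiv, equivSum]

@[simp] lemma rep_mem_usCoalition {j : Fin 435} : rep j ∈ usCoalition p v A B ↔ j ∈ B := by
  simp [usCoalition, mem_map_equiv, equivSum]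

lemma card_usCoalition : #(usCoalition p v A B) = p.toNat + v.toNat + #A + #B := by
  cases p <;> cases v <;> simp [usCoalition, card_disjSum] <;> omega

lemma numSen_usCoalition : numSen (usCoalition p v A B) = #A := by
  rw [numSen, ← card_image_of_injective A fun _ _ ↦ sen.inj]
  congr 1
  ext x
  rw [mem_filter]
  cases x <;> simp [isSen]

lemma numRep_usCoalition : numRep (usCoalition p v A B) = #B := by
  rw [numRep, ← card_image_of_injective B fun _ _ ↦ rep.inj]
  congr 1
  ext x
  rw [mem_filter]
  cases x <;> simp [isRep]

end usCoalition

lemma usCoalition_bijective :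
    Function.Bijective fun q : Bool × Bool × Finset (Fin 100) × Finset (Fin 435) ↦
      usCoalition q.1 q.2.1 q.2.2.1 q.2.2.2 := by
  refine ⟨fun ⟨p, v, A, B⟩ ⟨p', v', A', B'⟩ h ↦ ?_, fun S ↦ ?_⟩
  · simp only [Finset.ext_iff] at h
    have hp := h pres
    have hv := h vp
    simp only [pres_mem_usCoalition, vp_mem_usCoalition, Bool.coe_iff_coe] at hp hv
    simp only [hp, hv, Prod.mk.injEq, true_and]
    exact ⟨Finset.ext fun i ↦ by simpa using h (sen i), Finset.ext fun j ↦ by simpa using h (rep j)⟩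
  · refine ⟨(pres ∈ S, vp ∈ S, ({i | sen i ∈ S} : Finset _), ({j | rep j ∈ S} : Finset _)), ?_⟩
    ext (_ | _ | _ | _) <;> simp

lemma ncard_setOf_eq_card_filter_usCoalition (P : Finset USPlayer → Prop) [DecidablePred P] :
    {S | P S}.ncard = #{q : Bool × Bool × Finset (Fin 100) × Finset (Fin 435) |
      P (usCoalition q.1 q.2.1 q.2.2.1 q.2.2.2)} := by
  rw [Set.ncard_eq_toFinset_card', Set.toFinset_ofPred]
  exact (card_equiv (.ofBijective _ usCoalition_bijective) (by simp)).symm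

section counting

variable {α β : Type*} [Fintype α] [Fintype β]

lemma card_filter_bool_prod (P : Bool × α → Prop) [DecidablePred P] :
    #{x | P x} = #{a | P (true, a)} + #{a | P (false, a)} := by
  rw [card_filter, Fintype.sum_prod_type, Fintype.sum_bool, card_filter, card_filter]

lemma card_filter_prod_and (p : α → Prop) (q : β → Prop) [DecidablePred p] [DecidablePred q] :
    #{x : α × β | p x.1 ∧ q x.2} = #{a | p a} * #{b | q b} := by
  rw [← univ_product_univ, filter_product, card_product]

lemma card_filter_card_eq (m : ℕ) : #{s : Finset α | #s = m} = (Fintype.card α).choose m := by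
  rw [← card_univ, ← card_powersetCard, powersetCard_eq_filter, powerset_univ]

lemma card_filter_add_card_eq_and_le (c d k : ℕ) :
    #{s : Finset α | c + #s = k ∧ d ≤ #s} =
      if c + d ≤ k then (Fintype.card α).choose (k - c) else 0 := by
  split_ifs with h
  · rw [← card_filter_card_eq]
    exact congrArg card (filter_congr fun s _ ↦ by omega)
  · exact card_eq_zero.2 (filter_false_of_mem fun s _ ↦ by omega)

lemma card_filter_mem_and_card_eq [DecidableEq α] (a : α) (m : ℕ) :
    #{s : Finset α | a ∈ s ∧ #s = m + 1} = (Fintype.card α - 1).choose m := by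
  have := card_filter_powersetCard_subset {a} univ (m + 1) (subset_univ _) (by simp)
  rw [card_singleton, card_univ, add_tsub_cancel_right] at this
  rw [← this, powersetCard_eq_filter, powerset_univ, filter_filter]
  exact congrArg card (filter_congr fun s _ ↦ by rw [singleton_subset_iff, and_comm])

lemma card_filter_add_card_add_card_eq [DecidableEq β] (b : β) (c m d k : ℕ) :
    #{x : Finset α × Finset β | c + #x.1 + #x.2 = k ∧ b ∈ x.2 ∧ #x.2 = m + 1 ∧ d ≤ #x.1} =
      (if c + (m + 1) + d ≤ k then (Fintype.card α).choose (k - (c + (m + 1))) else 0) *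
        (Fintype.card β - 1).choose m := by
  calc _ = #{x : Finset α × Finset β |
          (c + (m + 1) + #x.1 = k ∧ d ≤ #x.1) ∧ (b ∈ x.2 ∧ #x.2 = m + 1)} := by
        refine congrArg card (filter_congr fun x _ ↦ ⟨?_, ?_⟩)
        · rintro ⟨hk, hb, hm, hd⟩
          exact ⟨⟨by omega, hd⟩, hb, hm⟩
        · rintro ⟨⟨hk, hd⟩, hb, hm⟩
          exact ⟨by omega, hb, hm, hd⟩
    _ = _ := by
        rw [card_filter_prod_and (fun A ↦ c + (m + 1) + #A = k ∧ d ≤ #A)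
            (fun B ↦ b ∈ B ∧ #B = m + 1),
          card_filter_add_card_eq_and_le, card_filter_mem_and_card_eq]

end counting

def vpCritCount (k : ℕ) : ℕ :=
  Nat.choose 100 50 * if 270 ≤ k then Nat.choose 435 (k - 52) else 0

def repCritCount (k : ℕ) : ℕ :=
  (if 270 ≤ k then Nat.choose 100 (k - 220) else 0) * Nat.choose 434 217 +
  (if 270 ≤ k then Nat.choose 100 (k - 219) else 0) * Nat.choose 434 217 +
  ((if 358 ≤ k then Nat.choose 100 (k - 291) else 0) * Nat.choose 434 289 +
  (if 357 ≤ k then Nat.choose 100 (k - 290) else 0) * Nat.choose 434 289)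

lemma usCrit_vp (k : ℕ) : usCrit vp k = vpCritCount k := by
  simp only [usCrit, vp_critical_iff]
  rw [ncard_setOf_eq_card_filter_usCoalition]
  simp only [card_usCoalition, numSen_usCoalition, numRep_usCoalition, vp_mem_usCoalition,
    pres_mem_usCoalition, card_filter_bool_prod, Bool.toNat_true, Bool.toNat_false, Nat.reduceAdd,
    add_zero, zero_add, true_and, Bool.false_eq_true, false_and, and_false, filter_false,
    card_empty]
  calc #{x : Finset (Fin 100) × Finset (Fin 435) | 2 + #x.1 + #x.2 = k ∧ #x.1 = 50 ∧ 218 ≤ #x.2}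
      = #{x : Finset (Fin 100) × Finset (Fin 435) | #x.1 = 50 ∧ (52 + #x.2 = k ∧ 218 ≤ #x.2)} :=
        congrArg card (filter_congr fun x _ ↦ by omega)
    _ = vpCritCount k := by
        rw [card_filter_prod_and (#· = 50) (fun B ↦ 52 + #B = k ∧ 218 ≤ #B),
          card_filter_card_eq, card_filter_add_card_eq_and_le, Fintype.card_fin, Fintype.card_fin,
          vpCritCount]

lemma usCrit_rep (r : Fin 435) (k : ℕ) : usCrit (rep r) k = repCritCount k := by
  simp only [usCrit, rep_critical_iff]
  rw [ncard_setOf_eq_card_filter_usCoalition]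
  simp only [card_usCoalition, numSen_usCoalition, numRep_usCoalition, vp_mem_usCoalition,
    pres_mem_usCoalition, rep_mem_usCoalition, card_filter_bool_prod, Bool.toNat_true,
    Bool.toNat_false, Nat.reduceAdd, true_and, not_true_eq_false, false_and, or_false,
    Bool.false_eq_true, not_false_eq_true, false_or]
  rw [card_filter_add_card_add_card_eq r 2 217 50 k, card_filter_add_card_add_card_eq r 1 217 51 k,
    card_filter_add_card_add_card_eq r 1 289 67 k, card_filter_add_card_add_card_eq r 0 289 67 k]
  simp only [Fintype.card_fin, Nat.reduceAdd, Nat.reduceSub, repCritCount]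

lemma repCritCount_eq_zero_of_vpCritCount_eq_zero {k : ℕ} (h : vpCritCount k = 0) :
    repCritCount k = 0 := by
  rw [vpCritCount, mul_eq_zero, or_iff_right (Nat.choose_pos (by norm_num)).ne'] at h
  split_ifs at h with hk
  · have : 435 < k - 52 := Nat.choose_eq_zero_iff.1 h
    simp [repCritCount, Nat.choose_eq_zero_of_lt (show 100 < k - 220 by omega),
      Nat.choose_eq_zero_of_lt (show 100 < k - 219 by omega),
      Nat.choose_eq_zero_of_lt (show 100 < k - 291 by omega),
      Nat.choose_eq_zero_of_lt (show 100 < k - 290 by omega)]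
  · simp [repCritCount, hk, show ¬ 357 ≤ k by omega, show ¬ 358 ≤ k by omega]

/- The comparisons are decided by evaluation; `Nat.choose` is first rewritten through
`descFactorial`, since its defining Pascal recursion is exponential for the kernel. -/

lemma repCritCount_lt_vpCritCount_of_le_356 :
    ∀ k, 270 ≤ k → k ≤ 356 → repCritCount k < vpCritCount k := by
  simp only [vpCritCount, repCritCount, Nat.choose_eq_descFactorial_div_factorial]
  decide +kernel

lemma repCritCount_lt_vpCritCount_of_380_le :
    ∀ k, 380 ≤ k → k ≤ 487 → repCritCount k < vpCritCount k := by
  simp only [vpCritCount, repCritCount, Nat.choose_eq_descFactorial_div_factorial]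
  decide +kernel

lemma vpCritCount_lt_repCritCount :
    ∀ k, 357 ≤ k → k ≤ 379 → vpCritCount k < repCritCount k := by
  simp only [vpCritCount, repCritCount, Nat.choose_eq_descFactorial_div_factorial]
  decide +kernel

/-- Proposition 6 of the paper: (a) if the vice president's critical number vanishes at
`k`, so does a representative's; (b) for `270 ≤ k ≤ 356` or `380 ≤ k ≤ 487` the vice
president's critical number strictly exceeds the representative's, while for
`357 ≤ k ≤ 379` the representative's strictly exceeds the vice president's. -/
theorem us_vp_vs_representative (r : Fin 435) :
    (∀ k : ℕ, usCrit USPlayer.vp k = 0 → usCrit (USPlayer.rep r) k = 0) ∧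
    (∀ k : ℕ, (270 ≤ k ∧ k ≤ 356) ∨ (380 ≤ k ∧ k ≤ 487) →
      usCrit USPlayer.vp k > usCrit (USPlayer.rep r) k) ∧
    (∀ k : ℕ, 357 ≤ k → k ≤ 379 →
      usCrit (USPlayer.rep r) k > usCrit USPlayer.vp k) := by
  simp only [usCrit_vp, usCrit_rep, gt_iff_lt]
  refine ⟨fun k ↦ repCritCount_eq_zero_of_vpCritCount_eq_zero, ?_, vpCritCount_lt_repCritCount⟩
  rintro k (⟨h₁, h₂⟩ | ⟨h₁, h₂⟩)
  exacts [repCritCount_lt_vpCritCount_of_le_356 k h₁ h₂,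
    repCritCount_lt_vpCritCount_of_380_le k h₁ h₂]
end

section
/- Let m_r, m_s, q_r, q_s be natural numbers with m_s < m_r, 1 < q_s < m_s, and 1 < q_r < m_r, and let C denote the binomial coefficient. Then C(m_s − 1, q_s − 1) · C(m_r, q_r + 1) > C(m_r − 1, q_r − 1) · C(m_s, q_s + 1) if and only if (m_r − q_r) · m_r · q_s · (q_s + 1) > (m_s − q_s) · m_s · q_r · (q_r + 1). -/
/-- Key identity: for `0 < q < m`, `q*(q+1)*C(m,q+1) = m*(m-q)*C(m-1,q-1)`. -/
lemma key_choose_id (m q : ℕ) (hq : 0 < q) (hqm : q < m) :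
    q * (q + 1) * m.choose (q + 1) = m * (m - q) * (m - 1).choose (q - 1) := by
  obtain ⟨m', rfl⟩ : ∃ m', m = m' + 1 := ⟨m - 1, by omega⟩
  obtain ⟨q', rfl⟩ : ∃ q', q = q' + 1 := ⟨q - 1, by omega⟩
  have h1 : (m' + 1) * m'.choose (q' + 1) = (m' + 1).choose (q' + 2) * (q' + 2) :=
    Nat.add_one_mul_choose_eq m' (q' + 1)
  have h2 : m'.choose (q' + 1) * (q' + 1) = m'.choose q' * (m' - q') :=
    Nat.choose_succ_right_eq m' q'
  simp only [Nat.add_sub_cancel]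
  have : (m' + 1) - (q' + 1) = m' - q' := by omega
  rw [this]
  calc (q' + 1) * (q' + 1 + 1) * (m' + 1).choose (q' + 1 + 1)
      = (q' + 1) * ((m' + 1).choose (q' + 2) * (q' + 2)) := by ring_nf
    _ = (q' + 1) * ((m' + 1) * m'.choose (q' + 1)) := by rw [h1]
    _ = (m' + 1) * (m'.choose (q' + 1) * (q' + 1)) := by ring
    _ = (m' + 1) * (m'.choose q' * (m' - q')) := by rw [h2]
    _ = (m' + 1) * (m' - q') * m'.choose q' := by ring

/-- Proposition 8 (a) of the paper: for `m_s < m_r`, `1 < q_s < m_s`, `1 < q_r < m_r`,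
`C(m_s−1, q_s−1)·C(m_r, q_r+1) > C(m_r−1, q_r−1)·C(m_s, q_s+1)` iff
`(m_r−q_r)·m_r·q_s·(q_s+1) > (m_s−q_s)·m_s·q_r·(q_r+1)`. -/
theorem choose_prod_next_coalition (ms mr qs qr : ℕ)
    (hsize : ms < mr) (hqs1 : 1 < qs) (hqs2 : qs < ms) (hqr1 : 1 < qr) (hqr2 : qr < mr) :
    (ms - 1).choose (qs - 1) * mr.choose (qr + 1) >
        (mr - 1).choose (qr - 1) * ms.choose (qs + 1) ↔
      (mr - qr) * mr * qs * (qs + 1) > (ms - qs) * ms * qr * (qr + 1) := by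
  have hr := key_choose_id mr qr (by omega) hqr2
  have hs := key_choose_id ms qs (by omega) hqs2
  set A := (ms - 1).choose (qs - 1)
  set B := (mr - 1).choose (qr - 1)
  have hA : 0 < A := Nat.choose_pos (by omega)
  have hB : 0 < B := Nat.choose_pos (by omega)
  set c := qs * (qs + 1) * (qr * (qr + 1))
  have hc : 0 < c := by positivity
  rw [gt_iff_lt, ← Nat.mul_lt_mul_left hc, gt_iff_lt]
  have e1 : c * (B * ms.choose (qs + 1)) = qr * (qr + 1) * (ms * (ms - qs) * A) * B := by
    rw [← hs]; ring
  have e2 : c * (A * mr.choose (qr + 1)) = qs * (qs + 1) * (mr * (mr - qr) * B) * A := by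
    rw [← hr]; ring
  rw [e1, e2]
  constructor
  · intro h
    have := Nat.lt_of_mul_lt_mul_right (a := A * B)
      (by calc (ms - qs) * ms * qr * (qr + 1) * (A * B)
            = qr * (qr + 1) * (ms * (ms - qs) * A) * B := by ring
        _ < qs * (qs + 1) * (mr * (mr - qr) * B) * A := h
        _ = (mr - qr) * mr * qs * (qs + 1) * (A * B) := by ring)
    exact this
  · intro h
    calc qr * (qr + 1) * (ms * (ms - qs) * A) * B
        = (ms - qs) * ms * qr * (qr + 1) * (A * B) := by ring
      _ < (mr - qr) * mr * qs * (qs + 1) * (A * B) :=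
          (Nat.mul_lt_mul_right (Nat.mul_pos hA hB)).mpr h
      _ = qs * (qs + 1) * (mr * (mr - qr) * B) * A := by ring
end

section
/- Let m_r, m_s, q_r, q_s be natural numbers with m_s < m_r, 1 < q_s < m_s, and 1 < q_r < m_r, and let C denote the binomial coefficient. Suppose q_s · m_r > q_r · m_s and (m_r − q_r) · (q_s + 1) > (m_s − q_s) · (q_r + 1). Then for every k with q_r + q_s ≤ k ≤ min(q_r + m_s, q_s + m_r), C(m_s − 1, q_s − 1) · C(m_r, k − q_s) > C(m_r − 1, q_r − 1) · C(m_s, k − q_r). -/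
/-!
Write `a = k - q_s` and `b = k - q_r`. Since `m · C(m-1, q-1) = q · C(m, q)`, the inequality at the
smallest `k = q_r + q_s` is `m_r / q_r > m_s / q_s`, i.e. the hypothesis `q_s m_r > q_r m_s`.
Raising `k` by one multiplies the two sides by `(m_r - a) / (a + 1)` and `(m_s - b) / (b + 1)`;
with `t = k - q_r - q_s` the first ratio is at least the second because
`(m_r - a)(b + 1) - (m_s - b)(a + 1) = (m_r - q_r)(q_s + 1) - (m_s - q_s)(q_r + 1) + t (m_r - m_s)`.
-/

namespace Nat

theorem mul_choose_sub_one_eq (m : ℕ) {p : ℕ} (hp : 0 < p) :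
    m * (m - 1).choose (p - 1) = m.choose p * p := by
  obtain ⟨p, rfl⟩ : ∃ p', p = p' + 1 := ⟨p - 1, by omega⟩
  cases m with
  | zero => simp
  | succ m => simpa using add_one_mul_choose_eq m p

theorem choose_sub_one_mul_choose_lt {m n p q : ℕ} (hp : 0 < p) (hq : 0 < q) (hpm : p ≤ m)
    (hqn : q ≤ n) (h : q * m < p * n) :
    (n - 1).choose (q - 1) * m.choose p < (m - 1).choose (p - 1) * n.choose q := by
  have hpos : 0 < (m - 1).choose (p - 1) * (n - 1).choose (q - 1) :=
    Nat.mul_pos (choose_pos (by omega)) (choose_pos (by omega))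
  refine Nat.lt_of_mul_lt_mul_right (a := p * q) ?_
  calc (n - 1).choose (q - 1) * m.choose p * (p * q)
      = (m - 1).choose (p - 1) * (n - 1).choose (q - 1) * (q * m) := by
        linear_combination -((n - 1).choose (q - 1) * q * mul_choose_sub_one_eq m hp)
    _ < (m - 1).choose (p - 1) * (n - 1).choose (q - 1) * (p * n) :=
        Nat.mul_lt_mul_of_pos_left h hpos
    _ = (m - 1).choose (p - 1) * n.choose q * (p * q) := by
        linear_combination (m - 1).choose (p - 1) * p * mul_choose_sub_one_eq n hq

theorem mul_choose_succ_lt_of_mul_choose_lt {A B m n a b : ℕ} (ham : a < m)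
    (hratio : (n - b) * (a + 1) ≤ (m - a) * (b + 1)) (h : B * n.choose b < A * m.choose a) :
    B * n.choose (b + 1) < A * m.choose (a + 1) := by
  refine Nat.lt_of_mul_lt_mul_right (a := (a + 1) * (b + 1)) ?_
  calc B * n.choose (b + 1) * ((a + 1) * (b + 1))
      = B * n.choose b * ((n - b) * (a + 1)) := by
        linear_combination B * (a + 1) * choose_succ_right_eq n b
    _ ≤ B * n.choose b * ((m - a) * (b + 1)) := Nat.mul_le_mul_left _ hratio
    _ < A * m.choose a * ((m - a) * (b + 1)) :=
        Nat.mul_lt_mul_of_pos_right h (Nat.mul_pos (by omega) (by omega))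
    _ = A * m.choose (a + 1) * ((a + 1) * (b + 1)) := by
        linear_combination -(A * (b + 1) * choose_succ_right_eq m a)

theorem mul_choose_add_lt_of_mul_choose_lt {A B m n a b : ℕ}
    (hratio : ∀ i, a + i < m → (n - (b + i)) * (a + i + 1) ≤ (m - (a + i)) * (b + i + 1))
    (h : B * n.choose b < A * m.choose a) :
    ∀ t, a + t ≤ m → B * n.choose (b + t) < A * m.choose (a + t) := by
  intro t
  induction t with
  | zero => exact fun _ ↦ h
  | succ t ih =>
    intro hat
    rw [← add_assoc, ← add_assoc]
    exact mul_choose_succ_lt_of_mul_choose_lt (by omega) (hratio t (by omega)) (ih (by omega))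

end Nat

theorem choose_ratio_le {ms mr qs qr : ℕ} (hsize : ms ≤ mr) (hqs : qs ≤ ms) (hqr : qr ≤ mr)
    (h : (ms - qs) * (qr + 1) < (mr - qr) * (qs + 1)) (t : ℕ) (ht : qr + t < mr) :
    (ms - (qs + t)) * (qr + t + 1) ≤ (mr - (qr + t)) * (qs + t + 1) := by
  rcases le_or_gt (qs + t) ms with hst | hst
  · zify [hst, ht.le, hqs, hqr] at h ⊢
    nlinarith [mul_nonneg (Int.natCast_nonneg t) (sub_nonneg.2 (Int.ofNat_le.2 hsize))]
  · simp [Nat.sub_eq_zero_of_le hst.le]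

/-- Proposition 8 (d) of the paper: for `m_s < m_r`, `1 < q_s < m_s`, `1 < q_r < m_r`, if
`q_s·m_r > q_r·m_s` and `(m_r−q_r)·(q_s+1) > (m_s−q_s)·(q_r+1)`, then for every `k` with
`q_r + q_s ≤ k ≤ min(q_r + m_s, q_s + m_r)`,
`C(m_s−1, q_s−1)·C(m_r, k−q_s) > C(m_r−1, q_r−1)·C(m_s, k−q_r)`. -/
theorem choose_prod_ineq_all_sizes (ms mr qs qr : ℕ)
    (hsize : ms < mr) (hqs1 : 1 < qs) (hqs2 : qs < ms) (hqr1 : 1 < qr) (hqr2 : qr < mr)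
    (h1 : qs * mr > qr * ms)
    (h2 : (mr - qr) * (qs + 1) > (ms - qs) * (qr + 1)) :
    ∀ k : ℕ, qr + qs ≤ k → k ≤ min (qr + ms) (qs + mr) →
      (ms - 1).choose (qs - 1) * mr.choose (k - qs) >
        (mr - 1).choose (qr - 1) * ms.choose (k - qr) := by
  intro k hk hk'
  obtain ⟨t, rfl⟩ := Nat.exists_eq_add_of_le hk
  have hbase := Nat.choose_sub_one_mul_choose_lt (by omega) (by omega) hqs2.le hqr2.le h1
  have hstep := choose_ratio_le hsize.le hqs2.le hqr2.le h2
  rw [show qr + qs + t - qs = qr + t by omega, show qr + qs + t - qr = qs + t by omega]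
  exact Nat.mul_choose_add_lt_of_mul_choose_lt hstep hbase t (by omega)
end
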